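/- Let Γ be a finite graph and let e, e′ be two non-separating edges. Then e and e′ belong to the same C1-set of Γ if and only if e and e′ lie in exactly the same cycles of Γ. -/

import Mathlib

/-! Basic theory of finite multigraphs (loops and multiple edges allowed),
following Caporaso–Viviani, "Torelli theorem for graphs and tropical curves". -/

noncomputable section

open scoped Classical

/-- A finite multigraph: finite types of vertices and edges, each edge having two
(possibly equal) endpoints `fst e` and `snd e`. -/
structure Multigraph where
  V : Type
  E : Type
  [fintV : Fintype V]
  [fintE : Fintype E]
  fst : E → V
  snd : E → V

namespace Multigraph

attribute [instance] Multigraph.fintV Multigraph.fintE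

variable (G : Multigraph)

/-- Two vertices are adjacent if some edge joins them. -/
def Adj (v w : G.V) : Prop :=
  ∃ e : G.E, (G.fst e = v ∧ G.snd e = w) ∨ (G.fst e = w ∧ G.snd e = v)

/-- Reachability by walks. -/
def Reachable (v w : G.V) : Prop := Relation.ReflTransGen G.Adj v w

def Preconnected : Prop := ∀ v w : G.V, G.Reachable v w

def Connected : Prop := Nonempty G.V ∧ G.Preconnected

/-- The number of connected components. -/
def numComponents : ℕ := Nat.card (Quot G.Adj)

/-- The first Betti number `b₁ = c - #V + #E`. -/
def b1 : ℤ := (G.numComponents : ℤ) + (Nat.card G.E : ℤ) - (Nat.card G.V : ℤ)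

/-- The spanning subgraph `Γ∖S` obtained by deleting the edges in `S`. -/
def deleteEdges (S : Set G.E) : Multigraph :=
  { V := G.V
    E := {e : G.E // e ∉ S}
    fst := fun e => G.fst e.1
    snd := fun e => G.snd e.1
    fintV := G.fintV
    fintE := Fintype.ofFinite _ }

/-- The subgraph spanned by a set of edges: its vertices are the incident vertices. -/
def restrict (S : Set G.E) : Multigraph :=
  { V := {v : G.V // ∃ e ∈ S, G.fst e = v ∨ G.snd e = v}
    E := ↥S
    fst := fun e => ⟨G.fst e.1, e.1, e.2, Or.inl rfl⟩
    snd := fun e => ⟨G.snd e.1, e.1, e.2, Or.inr rfl⟩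
    fintV := Fintype.ofFinite _
    fintE := Fintype.ofFinite _ }

/-- The graph `Γ(S)` obtained by contracting all the edges *not* in `S`; its vertices
are the connected components of `Γ∖S` and its edges are the elements of `S`. -/
def contractCompl (S : Set G.E) : Multigraph :=
  { V := Quot (G.deleteEdges S).Adj
    E := ↥S
    fst := fun e => Quot.mk _ (G.fst e.1)
    snd := fun e => Quot.mk _ (G.snd e.1)
    fintV := Fintype.ofFinite _
    fintE := Fintype.ofFinite _ }

/-- An edge is separating if its endpoints are no longer joined after deleting it. -/
def IsSeparating (e : G.E) : Prop :=
  ¬ (G.deleteEdges {e}).Reachable (G.fst e) (G.snd e)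

/-- The set of separating edges. -/
def sepEdges : Set G.E := {e | G.IsSeparating e}

/-- The graph with its isolated vertices removed. -/
def core : Multigraph := G.restrict Set.univ

/-- A cycle: a connected graph, free from separating edges, with `b₁ = 1`. -/
def IsCycleGraph : Prop := G.Connected ∧ G.sepEdges = ∅ ∧ G.b1 = 1

/-- `S` is (the edge set of) a cycle subgraph of `G`. -/
def IsCycleSet (S : Set G.E) : Prop := (G.restrict S).IsCycleGraph

/-- `S` is a C1-set of `G`: writing `Γ̃ = Γ∖E(Γ)_sep`, the set `S` consists of
non-separating edges, the contraction `Γ̃(S)` (with isolated vertices removed) is a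
cycle, and `Γ̃∖S` has no separating edges.  (Equivalently, `S` is a C1-set of the
connected component of `Γ̃` containing it.) -/
def IsC1 (S : Set G.E) : Prop :=
  (∀ e ∈ S, ¬ G.IsSeparating e) ∧
  (((G.deleteEdges G.sepEdges).contractCompl {e | e.1 ∈ S}).core).IsCycleGraph ∧
  ((G.deleteEdges G.sepEdges).deleteEdges {e | e.1 ∈ S}).sepEdges = ∅

/-! ### Orientations -/

/-- An orientation is encoded by a map `E → Bool`; `src` is the source of an edge. -/
def src (o : G.E → Bool) (e : G.E) : G.V := if o e then G.fst e else G.snd e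

/-- The target of an edge under the orientation `o`. -/
def tgt (o : G.E → Bool) (e : G.E) : G.V := if o e then G.snd e else G.fst e

/-- An orientation is totally cyclic if there is no nonempty set of vertices `W`,
whose complement meets the component of a vertex of `W`, such that all edges between
`W` and its complement go in the same direction. -/
def IsTotallyCyclic (o : G.E → Bool) : Prop :=
  ∀ W : Set G.V, W.Nonempty →
    (∃ v ∈ W, ∃ w, w ∉ W ∧ G.Reachable v w) →
    (∃ e, G.src o e ∈ W ∧ G.tgt o e ∉ W) ∧ (∃ e, G.tgt o e ∈ W ∧ G.src o e ∉ W)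

/-- Directed reachability with respect to an orientation. -/
def DReachable (o : G.E → Bool) (v w : G.V) : Prop :=
  Relation.ReflTransGen (fun a b => ∃ e, G.src o e = a ∧ G.tgt o e = b) v w

/-! ### Homology -/

/-- Incidence of an oriented edge on a vertex: `(tgt e = v) - (src e = v)`. -/
def inc (o : G.E → Bool) (e : G.E) (v : G.V) : ℤ :=
  (if G.tgt o e = v then 1 else 0) - (if G.src o e = v then 1 else 0)

/-- `H₁(Γ,ℤ)`: the kernel of the boundary map `C₁(Γ,ℤ) → C₀(Γ,ℤ)`. -/
def cycleSpace (o : G.E → Bool) : Submodule ℤ (G.E → ℤ) where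
  carrier := {f | ∀ v, ∑ e, f e * G.inc o e v = 0}
  zero_mem' := by intro v; simp
  add_mem' := by
    intro f g hf hg v
    simp only [Set.mem_setOf_eq] at hf hg
    simp [add_mul, Finset.sum_add_distrib, hf v, hg v]
  smul_mem' := by
    intro c f hf v
    simp only [Set.mem_setOf_eq] at hf
    simp [smul_eq_mul, mul_assoc, ← Finset.mul_sum, hf v]

/-- Real incidence. -/
def incR (o : G.E → Bool) (e : G.E) (v : G.V) : ℝ := (G.inc o e v : ℝ)

/-- `H₁(Γ,ℝ)`: the kernel of the boundary map `C₁(Γ,ℝ) → C₀(Γ,ℝ)`. -/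
def cycleSpaceR (o : G.E → Bool) : Submodule ℝ (G.E → ℝ) where
  carrier := {f | ∀ v, ∑ e, f e * G.incR o e v = 0}
  zero_mem' := by intro v; simp
  add_mem' := by
    intro f g hf hg v
    simp only [Set.mem_setOf_eq] at hf hg
    simp [add_mul, Finset.sum_add_distrib, hf v, hg v]
  smul_mem' := by
    intro c f hf v
    simp only [Set.mem_setOf_eq] at hf
    simp [smul_eq_mul, mul_assoc, ← Finset.mul_sum, hf v]

/-- The indicator chain of a set of edges. -/
def indicator (S : Set G.E) : G.E → ℤ := fun e => if e ∈ S then 1 else 0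

/-- `S` is a cyclically oriented cycle of `G` for the orientation `o`: `S` is a cycle
and its indicator chain is a homology class (each vertex of the cycle has one ingoing
and one outgoing edge of `S`). -/
def IsCyclicallyOriented (o : G.E → Bool) (S : Set G.E) : Prop :=
  G.IsCycleSet S ∧ G.indicator S ∈ G.cycleSpace o

/-- The coordinate functional `e*` restricted to `H₁(Γ,ℝ)`. -/
def edgeFunR (o : G.E → Bool) (e : G.E) : Module.Dual ℝ ↥(G.cycleSpaceR o) :=
  (LinearMap.proj e).comp (G.cycleSpaceR o).subtype

/-! ### Connectivity and regularity -/

/-- The degree (valence) of a vertex; loops count twice. -/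
def degree (v : G.V) : ℕ :=
  Nat.card {e : G.E // G.fst e = v} + Nat.card {e : G.E // G.snd e = v}

/-- A graph is 3-regular if every vertex has valence 3. -/
def ThreeRegular : Prop := ∀ v : G.V, G.degree v = 3

/-- Deletion of a set of vertices, together with all incident edges. -/
def deleteVerts (W : Set G.V) : Multigraph :=
  { V := {v : G.V // v ∉ W}
    E := {e : G.E // G.fst e ∉ W ∧ G.snd e ∉ W}
    fst := fun e => ⟨G.fst e.1, e.2.1⟩
    snd := fun e => ⟨G.snd e.1, e.2.2⟩
    fintV := Fintype.ofFinite _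
    fintE := Fintype.ofFinite _ }

/-- 3-edge connectivity: removing any 2 edges leaves the graph connected. -/
def EdgeConnected3 : Prop :=
  Nonempty G.V ∧ ∀ F : Set G.E, Nat.card F ≤ 2 → (G.deleteEdges F).Preconnected

/-- 3-connectivity: removing any 2 vertices (with incident edges) leaves the graph
connected. -/
def Connected3 : Prop :=
  Nonempty G.V ∧ ∀ W : Set G.V, Nat.card W ≤ 2 → (G.deleteVerts W).Preconnected

/-- Isomorphism of multigraphs. -/
def IsIsoTo (G H : Multigraph) : Prop :=
  ∃ (fV : G.V ≃ H.V) (fE : G.E ≃ H.E), ∀ e : G.E,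
    (H.fst (fE e) = fV (G.fst e) ∧ H.snd (fE e) = fV (G.snd e)) ∨
    (H.fst (fE e) = fV (G.snd e) ∧ H.snd (fE e) = fV (G.fst e))

/-- A bijection of edge sets is cyclic if it induces a bijection between cycles. -/
def IsCyclicBijection (G G' : Multigraph) (ε : G.E ≃ G'.E) : Prop :=
  ∀ S : Set G.E, G.IsCycleSet S ↔ G'.IsCycleSet (⇑ε '' S)

/-- Two orientations are equal as orientations (encodings may differ on loops). -/
def OrientEq (o₁ o₂ : G.E → Bool) : Prop :=
  ∀ e : G.E, G.src o₁ e = G.src o₂ e ∧ G.tgt o₁ e = G.tgt o₂ e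

/-- `o` is an orientation of `G` extending the orientation `φ` of `Γ∖T`. -/
def ExtendsOrient (T : Set G.E) (φ : (G.deleteEdges T).E → Bool) (o : G.E → Bool) : Prop :=
  ∀ e : (G.deleteEdges T).E,
    G.src o e.1 = (G.deleteEdges T).src φ e ∧ G.tgt o e.1 = (G.deleteEdges T).tgt φ e

end Multigraph
namespace Multigraph

variable (G : Multigraph)

/-- Adjacency using only edges in `A`. -/
def AdjOn (A : Set G.E) (v w : G.V) : Prop :=
  ∃ f ∈ A, (G.fst f = v ∧ G.snd f = w) ∨ (G.fst f = w ∧ G.snd f = v)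

/-- Reachability using only edges in `A`. -/
def ReachOn (A : Set G.E) : G.V → G.V → Prop := Relation.ReflTransGen (G.AdjOn A)

/-- Vertices incident to an edge of `A`. -/
def VS (A : Set G.E) : Set G.V := {v | ∃ e ∈ A, G.fst e = v ∨ G.snd e = v}

variable {G}

lemma AdjOn.symm {A : Set G.E} {v w : G.V} (h : G.AdjOn A v w) : G.AdjOn A w v := by
  obtain ⟨f, hf, h | h⟩ := h
  exacts [⟨f, hf, Or.inr h⟩, ⟨f, hf, Or.inl h⟩]

lemma adjOn_symm (A : Set G.E) : Symmetric (G.AdjOn A) := fun _ _ h => h.symm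

lemma ReachOn.symm {A : Set G.E} {v w : G.V} (h : G.ReachOn A v w) : G.ReachOn A w v :=
  (@Relation.ReflTransGen.stdSymm _ _ ⟨fun _ _ hh => adjOn_symm A hh⟩).symm _ _ h

lemma ReachOn.trans {A : Set G.E} {v w x : G.V} (h : G.ReachOn A v w)
    (h' : G.ReachOn A w x) : G.ReachOn A v x := Relation.ReflTransGen.trans h h'

lemma AdjOn.mono {A B : Set G.E} (hAB : A ⊆ B) {v w : G.V} (h : G.AdjOn A v w) :
    G.AdjOn B v w := by obtain ⟨f, hf, hh⟩ := h; exact ⟨f, hAB hf, hh⟩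

lemma ReachOn.mono {A B : Set G.E} (hAB : A ⊆ B) {v w : G.V} (h : G.ReachOn A v w) :
    G.ReachOn B v w := Relation.ReflTransGen.mono (fun _ _ hh => hh.mono hAB) _ _ h

lemma ReachOn.refl {A : Set G.E} {v : G.V} : G.ReachOn A v v := Relation.ReflTransGen.refl

lemma ReachOn.single {A : Set G.E} {v w : G.V} (h : G.AdjOn A v w) : G.ReachOn A v w :=
  Relation.ReflTransGen.single h

lemma adj_iff_adjOn_univ {v w : G.V} : G.Adj v w ↔ G.AdjOn Set.univ v w := by
  constructor
  · rintro ⟨f, h⟩; exact ⟨f, trivial, h⟩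
  · rintro ⟨f, _, h⟩; exact ⟨f, h⟩

lemma reachable_iff_reachOn_univ {v w : G.V} : G.Reachable v w ↔ G.ReachOn Set.univ v w := by
  constructor
  · exact fun h => Relation.ReflTransGen.mono (fun _ _ hh => adj_iff_adjOn_univ.1 hh) _ _ h
  · exact fun h => Relation.ReflTransGen.mono (fun _ _ hh => adj_iff_adjOn_univ.2 hh) _ _ h

/-- If a walk on `A` exists and `f`'s endpoints are joined avoiding `f`, walks avoid `f`. -/
lemma ReachOn.avoid {A : Set G.E} {f : G.E}
    (hf : G.ReachOn (A \ {f}) (G.fst f) (G.snd f)) {v w : G.V}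
    (h : G.ReachOn A v w) : G.ReachOn (A \ {f}) v w := by
  induction h with
  | refl => exact ReachOn.refl
  | tail _ hadj ih =>
    obtain ⟨g, hg, hh⟩ := hadj
    by_cases hgf : g = f
    · subst hgf
      rcases hh with ⟨h1, h2⟩ | ⟨h1, h2⟩
      · exact ih.trans (h1 ▸ h2 ▸ hf)
      · exact ih.trans (h1 ▸ h2 ▸ hf.symm)
    · exact ih.trans (ReachOn.single ⟨g, ⟨hg, hgf⟩, hh⟩)

/-! ### Counting components -/

lemma reachable_quot_eq {H : Multigraph} {v w : H.V} (h : H.Reachable v w) :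
    Quot.mk H.Adj v = Quot.mk H.Adj w := by
  induction h with
  | refl => rfl
  | tail _ hadj ih => exact ih.trans (Quot.sound hadj)

lemma numComponents_eq_one {H : Multigraph} (h : H.Connected) : H.numComponents = 1 := by
  obtain ⟨⟨v⟩, hp⟩ := h
  have hq : ∀ x : Quot H.Adj, x = Quot.mk H.Adj v := by
    intro x
    induction x using Quot.ind with
    | _ w => exact reachable_quot_eq (hp w v)
  have h1 : Subsingleton (Quot H.Adj) := ⟨fun a b => (hq a).trans (hq b).symm⟩
  have h2 : Nonempty (Quot H.Adj) := ⟨Quot.mk _ v⟩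
  exact Nat.card_eq_one_iff_unique.2 ⟨h1, h2⟩

lemma eqvGen_of_reflTransGen {α : Type*} {r : α → α → Prop} {v w : α}
    (h : Relation.ReflTransGen r v w) : Relation.EqvGen r v w := by
  induction h with
  | refl => exact Relation.EqvGen.refl _
  | tail _ hr ih => exact ih.trans _ _ _ (Relation.EqvGen.rel _ _ hr)

lemma reflTransGen_of_eqvGen {α : Type*} {r : α → α → Prop} (hs : Symmetric r) {v w : α}
    (h : Relation.EqvGen r v w) : Relation.ReflTransGen r v w := by
  induction h with
  | rel _ _ hr => exact Relation.ReflTransGen.single hr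
  | refl => exact Relation.ReflTransGen.refl
  | symm x y _ ih => exact (@Relation.ReflTransGen.stdSymm _ _ ⟨fun _ _ hh => hs hh⟩).symm _ _ ih
  | trans x y z _ _ ih1 ih2 => exact ih1.trans ih2

lemma eqvGen_cases {α : Type*} {r r' : α → α → Prop} {a b : α}
    (hr : ∀ v w, r v w → r' v w ∨ ((v = a ∧ w = b) ∨ (v = b ∧ w = a)))
    {v w : α} (h : Relation.EqvGen r v w) :
    Relation.EqvGen r' v w ∨
      ((Relation.EqvGen r' v a ∨ Relation.EqvGen r' v b) ∧
       (Relation.EqvGen r' w a ∨ Relation.EqvGen r' w b)) := by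
  induction h with
  | rel x y hxy =>
    rcases hr _ _ hxy with h | ⟨⟨rfl, rfl⟩ | ⟨rfl, rfl⟩⟩
    · exact Or.inl (Relation.EqvGen.rel _ _ h)
    · exact Or.inr ⟨Or.inl (Relation.EqvGen.refl _), Or.inr (Relation.EqvGen.refl _)⟩
    · exact Or.inr ⟨Or.inr (Relation.EqvGen.refl _), Or.inl (Relation.EqvGen.refl _)⟩
  | refl x => exact Or.inl (Relation.EqvGen.refl _)
  | symm x y _ ih =>
    rcases ih with h | ⟨h1, h2⟩
    · exact Or.inl (h.symm _ _)
    · exact Or.inr ⟨h2, h1⟩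
  | trans x y z _ _ ih1 ih2 =>
    rcases ih1 with h1 | ⟨h1a, h1b⟩
    · rcases ih2 with h2 | ⟨h2a, h2b⟩
      · exact Or.inl (h1.trans _ _ _ h2)
      · exact Or.inr ⟨(h2a.imp (fun hh => (h1.trans _ _ _ hh)) (fun hh => (h1.trans _ _ _ hh))), h2b⟩
    · rcases ih2 with h2 | ⟨h2a, h2b⟩
      · exact Or.inr ⟨h1a, h1b.imp (fun hh => ((h2.symm _ _).trans _ _ _ hh))
          (fun hh => ((h2.symm _ _).trans _ _ _ hh))⟩
      · exact Or.inr ⟨h1a, h2b⟩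

lemma card_quot_le_card_quot_add_one {α : Type*} [Finite α] {r r' : α → α → Prop} {a b : α}
    (hle : ∀ v w, r' v w → r v w)
    (hr : ∀ v w, r v w → r' v w ∨ ((v = a ∧ w = b) ∨ (v = b ∧ w = a))) :
    Nat.card (Quot r') ≤ Nat.card (Quot r) + 1 := by
  have hfin' : Finite (Quot r') := Finite.of_surjective _ (Quot.exists_rep)
  have hfin : Finite (Quot r) := Finite.of_surjective _ (Quot.exists_rep)
  set π : Quot r' → Quot r := Quot.lift (Quot.mk r) (fun v w h => Quot.sound (hle v w h)) with hπ
  set B : Quot r' := Quot.mk r' b with hB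
  have hinj : Function.Injective (fun x : {x : Quot r' // x ≠ B} => π x.1) := by
    rintro ⟨x, hx⟩ ⟨y, hy⟩ hxy
    obtain ⟨v, rfl⟩ := Quot.exists_rep x
    obtain ⟨w, rfl⟩ := Quot.exists_rep y
    simp only [hπ] at hxy
    have hvw : Relation.EqvGen r v w := Quot.eq.1 hxy
    rcases eqvGen_cases hr hvw with h | ⟨h1, h2⟩
    · exact Subtype.ext (Quot.eq.2 h)
    · rcases h1 with h1 | h1
      · rcases h2 with h2 | h2
        · exact Subtype.ext (Quot.eq.2 (h1.trans _ _ _ (h2.symm _ _)))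
        · exact absurd (Quot.eq.2 h2) hy
      · exact absurd (Quot.eq.2 h1) hx
  have h1 : Nat.card {x : Quot r' // x ≠ B} ≤ Nat.card (Quot r) :=
    Nat.card_le_card_of_injective _ hinj
  have h2 : Nat.card {x : Quot r' // x ≠ B} = Nat.card ↥({B}ᶜ : Set (Quot r')) := rfl
  have h3 := Set.ncard_add_ncard_compl ({B} : Set (Quot r'))
  rw [Set.ncard_singleton] at h3
  rw [h2, Nat.card_coe_set_eq] at h1
  omega

end Multigraph
namespace Multigraph

variable {G : Multigraph}

lemma card_V_le_aux : ∀ (n : ℕ) (H : Multigraph), Nat.card H.E = n →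
    Nat.card H.V ≤ Nat.card H.E + H.numComponents := by
  intro n
  induction n with
  | zero =>
    intro H hE
    have hEmpty : IsEmpty H.E := by
      rcases Nat.card_eq_zero.1 hE with h | h
      · exact h
      · exact absurd h (not_infinite_iff_finite.2 (Finite.of_fintype _))
    have hAdj : ∀ v w : H.V, ¬ H.Adj v w := by
      rintro v w ⟨f, _⟩; exact hEmpty.elim f
    -- Quot H.Adj ≃ H.V
    have : Nat.card (Quot H.Adj) = Nat.card H.V := by
      apply Nat.card_congr
      refine ⟨Quot.lift id (fun v w h => absurd h (hAdj v w)), Quot.mk _, ?_, ?_⟩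
      · intro x; induction x using Quot.ind with | _ w => rfl
      · intro v; rfl
    unfold numComponents
    omega
  | succ n ih =>
    intro H hE
    have hNE : Nonempty H.E := Nat.card_pos_iff.1 (by omega) |>.1
    obtain ⟨e0⟩ := hNE
    set H' := H.deleteEdges {e0} with hH'
    have hcard' : Nat.card H'.E = n := by
      have h2 : Nat.card H'.E = Nat.card ↥(({e0} : Set H.E)ᶜ) := rfl
      have h3 := Set.ncard_add_ncard_compl ({e0} : Set H.E)
      rw [Set.ncard_singleton] at h3
      rw [h2, Nat.card_coe_set_eq]
      omega
    have hIH := ih H' hcard'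
    have hV : Nat.card H'.V = Nat.card H.V := rfl
    have hglue : H.numComponents ≤ H'.numComponents ∧
        H'.numComponents ≤ H.numComponents + 1 := by
      constructor
      ·
        -- surjection Quot H'.Adj → Quot H.Adj, so card Quot H.Adj ≤ card Quot H'.Adj
        have hsurj : Function.Surjective
            (Quot.lift (Quot.mk H.Adj) (fun v w (h : H'.Adj v w) => Quot.sound
              (by obtain ⟨f, hf⟩ := h; exact ⟨f.1, hf⟩)) : Quot H'.Adj → Quot H.Adj) := by
          intro x
          induction x using Quot.ind with
          | _ w => exact ⟨Quot.mk _ w, rfl⟩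
        have : Finite (Quot H'.Adj) := Finite.of_surjective _ (Quot.exists_rep)
        exact Nat.card_le_card_of_surjective _ hsurj
      · apply card_quot_le_card_quot_add_one (a := H.fst e0) (b := H.snd e0)
        · rintro v w ⟨f, hf⟩; exact ⟨f.1, hf⟩
        · rintro v w ⟨f, hf⟩
          by_cases hfe : f = e0
          · subst hfe
            rcases hf with ⟨h1, h2⟩ | ⟨h1, h2⟩
            · exact Or.inr (Or.inl ⟨h1.symm, h2.symm⟩)
            · exact Or.inr (Or.inr ⟨h2.symm, h1.symm⟩)
          · exact Or.inl ⟨(⟨f, hfe⟩ : H'.E), hf⟩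
    unfold numComponents at *
    omega

lemma card_V_le (H : Multigraph) : Nat.card H.V ≤ Nat.card H.E + H.numComponents :=
  card_V_le_aux _ H rfl

/-! ### Transfer lemmas -/

/-- Pull back a set of edges of `G.deleteEdges T` to a set of edges of `G`. -/
def pullDel (G : Multigraph) (T : Set G.E) (B : Set (G.deleteEdges T).E) : Set G.E :=
  {f | ∃ h : f ∉ T, (⟨f, h⟩ : (G.deleteEdges T).E) ∈ B}

lemma deleteEdges_adjOn_iff {T : Set G.E} {B : Set (G.deleteEdges T).E} {v w : G.V} :
    (G.deleteEdges T).AdjOn B v w ↔ G.AdjOn (G.pullDel T B) v w := by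
  constructor
  · rintro ⟨⟨f, hfT⟩, hfB, hh⟩; exact ⟨f, ⟨hfT, hfB⟩, hh⟩
  · rintro ⟨f, ⟨hfT, hfB⟩, hh⟩; exact ⟨⟨f, hfT⟩, hfB, hh⟩

lemma deleteEdges_reachOn_iff {T : Set G.E} {B : Set (G.deleteEdges T).E} {v w : G.V} :
    (G.deleteEdges T).ReachOn B v w ↔ G.ReachOn (G.pullDel T B) v w := by
  constructor
  · exact fun h => Relation.ReflTransGen.mono (fun _ _ hh => deleteEdges_adjOn_iff.1 hh) _ _ h
  · exact fun h => Relation.ReflTransGen.mono (fun _ _ hh => deleteEdges_adjOn_iff.2 hh) _ _ h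

lemma deleteEdges_adj_iff {T : Set G.E} {v w : G.V} :
    (G.deleteEdges T).Adj v w ↔ G.AdjOn Tᶜ v w := by
  constructor
  · rintro ⟨⟨f, hfT⟩, hh⟩; exact ⟨f, hfT, hh⟩
  · rintro ⟨f, hfT, hh⟩; exact ⟨⟨f, hfT⟩, hh⟩

lemma deleteEdges_reachable_iff {T : Set G.E} {v w : G.V} :
    (G.deleteEdges T).Reachable v w ↔ G.ReachOn Tᶜ v w := by
  constructor
  · exact fun h => Relation.ReflTransGen.mono (fun _ _ hh => deleteEdges_adj_iff.1 hh) _ _ h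
  · exact fun h => Relation.ReflTransGen.mono (fun _ _ hh => deleteEdges_adj_iff.2 hh) _ _ h

lemma isSeparating_iff {e : G.E} :
    G.IsSeparating e ↔ ¬ G.ReachOn {e}ᶜ (G.fst e) (G.snd e) := by
  unfold IsSeparating
  rw [deleteEdges_reachable_iff]

/-- Pull back a set of edges of `G.restrict S` to a set of edges of `G`. -/
def pullRes (G : Multigraph) (S : Set G.E) (A : Set (G.restrict S).E) : Set G.E :=
  {f | ∃ h : f ∈ S, (⟨f, h⟩ : ↥S) ∈ A}

lemma restrict_reachOn_iff {S : Set G.E} {A : Set (G.restrict S).E} {v w : (G.restrict S).V} :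
    (G.restrict S).ReachOn A v w ↔ G.ReachOn (G.pullRes S A) v.1 w.1 := by
  constructor
  · intro h
    induction h with
    | refl => exact ReachOn.refl
    | tail _ hadj ih =>
      obtain ⟨⟨f, hfS⟩, hfA, hh⟩ := hadj
      refine ih.trans (ReachOn.single ⟨f, ⟨hfS, hfA⟩, ?_⟩)
      rcases hh with ⟨h1, h2⟩ | ⟨h1, h2⟩
      · exact Or.inl ⟨congrArg Subtype.val h1, congrArg Subtype.val h2⟩
      · exact Or.inr ⟨congrArg Subtype.val h1, congrArg Subtype.val h2⟩
  · intro h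
    obtain ⟨v, hv⟩ := v
    obtain ⟨w, hw⟩ := w
    simp only at h
    refine Relation.ReflTransGen.head_induction_on
      (motive := fun a _ => ∀ ha : ∃ e ∈ S, G.fst e = a ∨ G.snd e = a,
        (G.restrict S).ReachOn A ⟨a, ha⟩ ⟨w, hw⟩) h ?_ ?_ hv
    · intro hb; exact Relation.ReflTransGen.refl
    · intro a c hac hcw ih ha
      obtain ⟨f, ⟨hfS, hfA⟩, hh⟩ := hac
      have hc : ∃ e ∈ S, G.fst e = c ∨ G.snd e = c := by
        rcases hh with ⟨h1, h2⟩ | ⟨h1, h2⟩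
        · exact ⟨f, hfS, Or.inr h2⟩
        · exact ⟨f, hfS, Or.inl h1⟩
      refine Relation.ReflTransGen.head ?_ (ih hc)
      refine ⟨⟨f, hfS⟩, hfA, ?_⟩
      rcases hh with ⟨h1, h2⟩ | ⟨h1, h2⟩
      · exact Or.inl ⟨Subtype.ext h1, Subtype.ext h2⟩
      · exact Or.inr ⟨Subtype.ext h1, Subtype.ext h2⟩

end Multigraph
namespace Multigraph

variable {G : Multigraph}

lemma mem_VS_fst {C : Set G.E} {f : G.E} (hf : f ∈ C) : G.fst f ∈ G.VS C :=
  ⟨f, hf, Or.inl rfl⟩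

lemma mem_VS_snd {C : Set G.E} {f : G.E} (hf : f ∈ C) : G.snd f ∈ G.VS C :=
  ⟨f, hf, Or.inr rfl⟩

lemma VS_mono {A B : Set G.E} (h : A ⊆ B) : G.VS A ⊆ G.VS B := by
  rintro v ⟨f, hf, hh⟩; exact ⟨f, h hf, hh⟩

lemma pullRes_univ (S : Set G.E) : G.pullRes S Set.univ = S := by
  ext f; simp [pullRes]
  exact ⟨fun ⟨h, _⟩ => h, fun h => ⟨h, trivial⟩⟩

lemma pullRes_compl_singleton {S : Set G.E} (x : (G.restrict S).E) :
    G.pullRes S ({x}ᶜ : Set (G.restrict S).E) = S \ {x.1} := by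
  ext g
  simp only [pullRes, Set.mem_setOf_eq, Set.mem_compl_iff, Set.mem_singleton_iff,
    Set.mem_diff]
  constructor
  · rintro ⟨h, hne⟩
    exact ⟨h, fun hg => hne (Subtype.ext hg)⟩
  · rintro ⟨h, hne⟩
    exact ⟨h, fun hg => hne (congrArg Subtype.val hg)⟩

lemma restrict_reachable_iff {C : Set G.E} (v w : (G.restrict C).V) :
    (G.restrict C).Reachable v w ↔ G.ReachOn C v.1 w.1 := by
  rw [reachable_iff_reachOn_univ, restrict_reachOn_iff, pullRes_univ]

lemma isCycleSet_iff {C : Set G.E} :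
    G.IsCycleSet C ↔
      C.Nonempty ∧ (∀ v ∈ G.VS C, ∀ w ∈ G.VS C, G.ReachOn C v w) ∧
      (∀ f ∈ C, G.ReachOn (C \ {f}) (G.fst f) (G.snd f)) ∧
      (G.VS C).ncard = C.ncard := by
  have hcardV : Nat.card (G.restrict C).V = (G.VS C).ncard := Nat.card_coe_set_eq (G.VS C)
  have hcardE : Nat.card (G.restrict C).E = C.ncard := Nat.card_coe_set_eq C
  have hne : Nonempty (G.restrict C).V ↔ C.Nonempty := by
    constructor
    · rintro ⟨⟨v, f, hf, _⟩⟩; exact ⟨f, hf⟩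
    · rintro ⟨f, hf⟩; exact ⟨⟨G.fst f, ⟨f, hf, Or.inl rfl⟩⟩⟩
  have hsepf : ∀ x : (G.restrict C).E,
      ((G.restrict C).IsSeparating x ↔ ¬ G.ReachOn (C \ {x.1}) (G.fst x.1) (G.snd x.1)) := by
    intro x
    rw [isSeparating_iff, restrict_reachOn_iff, pullRes_compl_singleton]
    rfl
  have hsep : ((G.restrict C).sepEdges = ∅) ↔
      ∀ f ∈ C, G.ReachOn (C \ {f}) (G.fst f) (G.snd f) := by
    rw [Set.eq_empty_iff_forall_notMem]
    constructor
    · intro h f hf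
      have := h ⟨f, hf⟩
      change ¬ (G.restrict C).IsSeparating ⟨f, hf⟩ at this
      have := (hsepf ⟨f, hf⟩).not.1 this
      exact Classical.not_not.1 this
    · intro h x hx
      change (G.restrict C).IsSeparating x at hx
      exact ((hsepf x).1 hx) (h x.1 x.2)
  constructor
  · rintro ⟨⟨hnev, hpre⟩, hsep0, hb1⟩
    have hc1 : (G.restrict C).numComponents = 1 := numComponents_eq_one ⟨hnev, hpre⟩
    refine ⟨hne.1 hnev, ?_, hsep.1 hsep0, ?_⟩
    · intro v hv w hw
      exact (restrict_reachable_iff ⟨v, hv⟩ ⟨w, hw⟩).1 (hpre _ _)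
    · unfold b1 at hb1
      rw [hc1, hcardV, hcardE] at hb1
      omega
  · rintro ⟨hne0, hconn, hsep0, hcard⟩
    have hnev : Nonempty (G.restrict C).V := hne.2 hne0
    have hpre : (G.restrict C).Preconnected := by
      intro v w
      exact (restrict_reachable_iff v w).2 (hconn v.1 v.2 w.1 w.2)
    have hc1 : (G.restrict C).numComponents = 1 := numComponents_eq_one ⟨hnev, hpre⟩
    refine ⟨⟨hnev, hpre⟩, hsep.2 hsep0, ?_⟩
    unfold b1
    rw [hc1, hcardV, hcardE, hcard]
    ring

lemma cycle_edge_reachOn {C : Set G.E} (hC : G.IsCycleSet C) {f : G.E} (hf : f ∈ C) :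
    G.ReachOn (C \ {f}) (G.fst f) (G.snd f) :=
  (isCycleSet_iff.1 hC).2.2.1 f hf

lemma cycle_edge_not_separating {C : Set G.E} (hC : G.IsCycleSet C) {f : G.E} (hf : f ∈ C) :
    ¬ G.IsSeparating f := by
  rw [isSeparating_iff, Classical.not_not]
  exact (cycle_edge_reachOn hC hf).mono (fun g hg => hg.2)

end Multigraph
namespace Multigraph

variable {G : Multigraph}

lemma VS_empty : G.VS (∅ : Set G.E) = ∅ := by
  ext v; simp [VS]

lemma VS_insert {f : G.E} {C : Set G.E} :
    G.VS (insert f C) = {G.fst f, G.snd f} ∪ G.VS C := by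
  ext v
  simp only [VS, Set.mem_setOf_eq, Set.mem_union, Set.mem_insert_iff,
    Set.mem_singleton_iff]
  constructor
  · rintro ⟨g, (rfl | hg), h⟩
    · rcases h with h | h
      · exact Or.inl (Or.inl h.symm)
      · exact Or.inl (Or.inr h.symm)
    · exact Or.inr ⟨g, hg, h⟩
  · rintro ((rfl | rfl) | ⟨g, hg, h⟩)
    · exact ⟨f, Or.inl rfl, Or.inl rfl⟩
    · exact ⟨f, Or.inl rfl, Or.inr rfl⟩
    · exact ⟨g, Or.inr hg, h⟩

/-- A simple path from `v` to `w` using edges of `B`, recorded by its edge set. -/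
inductive IsPath (G : Multigraph) (B : Set G.E) : G.V → G.V → Set G.E → Prop
  | nil (v : G.V) : IsPath G B v v ∅
  | cons (f : G.E) (v u w : G.V) (C : Set G.E) (hfB : f ∈ B)
      (hend : (G.fst f = v ∧ G.snd f = u) ∨ (G.fst f = u ∧ G.snd f = v))
      (tail : IsPath G B u w C) (hv1 : v ∉ G.VS C) (hv2 : v ≠ w) :
      IsPath G B v w (insert f C)

namespace IsPath

lemma subset {B : Set G.E} {v w : G.V} {C : Set G.E} (h : IsPath G B v w C) : C ⊆ B := by
  induction h with
  | nil => exact Set.empty_subset _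
  | cons f v u w C hfB hend tail hv1 hv2 ih =>
    exact Set.insert_subset hfB ih

lemma ends {B : Set G.E} {v w : G.V} {C : Set G.E} (h : IsPath G B v w C) :
    (C = ∅ ∧ v = w) ∨ (v ∈ G.VS C ∧ w ∈ G.VS C) := by
  induction h with
  | nil => exact Or.inl ⟨rfl, rfl⟩
  | cons f v u w C hfB hend tail hv1 hv2 ih =>
    refine Or.inr ⟨?_, ?_⟩
    · rw [VS_insert]
      rcases hend with ⟨h1, _⟩ | ⟨_, h2⟩
      · exact Or.inl (Or.inl h1.symm)
      · exact Or.inl (Or.inr h2.symm)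
    · rcases ih with ⟨rfl, rfl⟩ | ⟨_, hw⟩
      · rw [VS_insert]
        rcases hend with ⟨_, h2⟩ | ⟨h1, _⟩
        · exact Or.inl (Or.inr h2.symm)
        · exact Or.inl (Or.inl h1.symm)
      · exact (VS_mono (Set.subset_insert _ _)) hw

lemma reach {B : Set G.E} {v w : G.V} {C : Set G.E} (h : IsPath G B v w C) :
    G.ReachOn C v w := by
  induction h with
  | nil => exact ReachOn.refl
  | cons f v u w C hfB hend tail hv1 hv2 ih =>
    refine (ReachOn.single ⟨f, Set.mem_insert _ _, hend⟩).trans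
      (ih.mono (Set.subset_insert _ _))

lemma conn {B : Set G.E} {v w : G.V} {C : Set G.E} (h : IsPath G B v w C) :
    ∀ x ∈ G.VS C, G.ReachOn C v x := by
  induction h with
  | nil => intro x hx; rw [VS_empty] at hx; exact absurd hx (Set.notMem_empty x)
  | cons f v u w C hfB hend tail hv1 hv2 ih =>
    intro x hx
    rw [VS_insert] at hx
    have hstep : G.ReachOn (insert f C) v u :=
      ReachOn.single ⟨f, Set.mem_insert _ _, hend⟩
    rcases hx with (rfl | rfl) | hx
    · rcases hend with ⟨h1, _⟩ | ⟨h1, _⟩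
      · rw [h1]; exact ReachOn.refl
      · rw [h1]; exact hstep
    · rcases hend with ⟨_, h2⟩ | ⟨_, h2⟩
      · rw [h2]; exact hstep
      · rw [h2]; exact ReachOn.refl
    · exact hstep.trans ((ih x hx).mono (Set.subset_insert _ _))

lemma edge_not_mem {f : G.E} {v u : G.V} {C : Set G.E}
    (hend : (G.fst f = v ∧ G.snd f = u) ∨ (G.fst f = u ∧ G.snd f = v))
    (hv1 : v ∉ G.VS C) : f ∉ C := by
  intro hf
  apply hv1
  rcases hend with ⟨h1, _⟩ | ⟨_, h2⟩
  · exact h1 ▸ mem_VS_fst hf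
  · exact h2 ▸ mem_VS_snd hf

lemma card {B : Set G.E} {v w : G.V} {C : Set G.E} (h : IsPath G B v w C) :
    (C = ∅ ∧ v = w) ∨
      ((G.VS C).ncard = C.ncard + 1 ∧ v ∈ G.VS C ∧ w ∈ G.VS C ∧ v ≠ w) := by
  induction h with
  | nil => exact Or.inl ⟨rfl, rfl⟩
  | cons f v u w C hfB hend tail hv1 hv2 ih =>
    have hfC : f ∉ C := edge_not_mem hend hv1
    have hvins : v ∈ G.VS (insert f C) := by
      rw [VS_insert]
      rcases hend with ⟨h1, _⟩ | ⟨_, h2⟩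
      · exact Or.inl (Or.inl h1.symm)
      · exact Or.inl (Or.inr h2.symm)
    rcases ih with ⟨rfl, rfl⟩ | ⟨hcard, hu, hw, huw⟩
    · refine Or.inr ⟨?_, hvins, ?_, hv2⟩
      · have hVS : G.VS (insert f (∅ : Set G.E)) = {v, u} := by
          rw [VS_insert, VS_empty, Set.union_empty]
          rcases hend with ⟨h1, h2⟩ | ⟨h1, h2⟩
          · rw [h1, h2]
          · rw [h1, h2]; exact Set.pair_comm _ _
        rw [hVS, Set.ncard_pair hv2, Set.ncard_insert_of_notMem (Set.notMem_empty f),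
          Set.ncard_empty]
      · rw [VS_insert]
        rcases hend with ⟨_, h2⟩ | ⟨h1, _⟩
        · exact Or.inl (Or.inr h2.symm)
        · exact Or.inl (Or.inl h1.symm)
    · refine Or.inr ⟨?_, hvins, (VS_mono (Set.subset_insert _ _)) hw, hv2⟩
      have hpair : ({G.fst f, G.snd f} : Set G.V) = {v, u} := by
        rcases hend with ⟨h1, h2⟩ | ⟨h1, h2⟩
        · rw [h1, h2]
        · rw [h1, h2]; exact Set.pair_comm _ _
      have hVS : G.VS (insert f C) = insert v (G.VS C) := by
        rw [VS_insert, hpair]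
        ext x
        simp only [Set.mem_union, Set.mem_insert_iff, Set.mem_singleton_iff]
        constructor
        · rintro ((rfl | rfl) | hx)
          · exact Or.inl rfl
          · exact Or.inr hu
          · exact Or.inr hx
        · rintro (rfl | hx)
          · exact Or.inl (Or.inl rfl)
          · exact Or.inr hx
      rw [hVS, Set.ncard_insert_of_notMem hv1, Set.ncard_insert_of_notMem hfC, hcard]

lemma split {B : Set G.E} {v w : G.V} {C : Set G.E} (h : IsPath G B v w C) :
    ∀ f ∈ C,
      (G.ReachOn (C \ {f}) v (G.fst f) ∧ G.ReachOn (C \ {f}) (G.snd f) w) ∨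
      (G.ReachOn (C \ {f}) v (G.snd f) ∧ G.ReachOn (C \ {f}) (G.fst f) w) := by
  induction h with
  | nil => intro f hf; exact absurd hf (Set.notMem_empty f)
  | cons g v u w C hgB hend tail hv1 hv2 ih =>
    intro f hf
    have hgC : g ∉ C := edge_not_mem hend hv1
    rcases Set.mem_insert_iff.1 hf with rfl | hfC
    · rw [Set.insert_diff_self_of_notMem hgC]
      rcases hend with ⟨h1, h2⟩ | ⟨h1, h2⟩
      · exact Or.inl ⟨h1 ▸ ReachOn.refl, h2 ▸ tail.reach⟩
      · exact Or.inr ⟨h2 ▸ ReachOn.refl, h1 ▸ tail.reach⟩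
    · have hfg : f ≠ g := fun hh => hgC (hh ▸ hfC)
      have hsub : C \ {f} ⊆ (insert g C) \ {f} :=
        Set.diff_subset_diff_left (Set.subset_insert _ _)
      have hstep : G.ReachOn ((insert g C) \ {f}) v u :=
        ReachOn.single ⟨g, ⟨Set.mem_insert _ _, fun hh => hfg (hh.symm)⟩, hend⟩
      rcases ih f hfC with ⟨h1, h2⟩ | ⟨h1, h2⟩
      · exact Or.inl ⟨hstep.trans (h1.mono hsub), (h2.mono hsub)⟩
      · exact Or.inr ⟨hstep.trans (h1.mono hsub), (h2.mono hsub)⟩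

lemma trunc {B : Set G.E} {u w : G.V} {C : Set G.E} (h : IsPath G B u w C) :
    ∀ x, (x ∈ G.VS C ∨ x = w) → ∃ C', C' ⊆ C ∧ IsPath G B x w C' := by
  induction h with
  | nil =>
    intro x hx
    rw [VS_empty] at hx
    rcases hx with hx | rfl
    · exact absurd hx (Set.notMem_empty x)
    · exact ⟨∅, Set.Subset.rfl, IsPath.nil x⟩
  | cons g v u w C hgB hend tail hv1 hv2 ih =>
    intro x hx
    by_cases hxv : x = v
    · subst hxv
      exact ⟨insert g C, Set.Subset.rfl, IsPath.cons g x u w C hgB hend tail hv1 hv2⟩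
    · have hx' : x ∈ G.VS C ∨ x = w := by
        rcases hx with hx | rfl
        · rw [VS_insert] at hx
          rcases hx with (rfl | rfl) | hx
          · rcases hend with ⟨h1, h2⟩ | ⟨h1, h2⟩
            · exact absurd h1 hxv
            · rcases tail.ends with ⟨_, rfl⟩ | ⟨hu, _⟩
              · exact Or.inr h1
              · exact Or.inl (h1 ▸ hu)
          · rcases hend with ⟨h1, h2⟩ | ⟨h1, h2⟩
            · rcases tail.ends with ⟨_, rfl⟩ | ⟨hu, _⟩
              · exact Or.inr h2
              · exact Or.inl (h2 ▸ hu)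
            · exact absurd h2 hxv
          · exact Or.inl hx
        · exact Or.inr rfl
      obtain ⟨C', hC', hp⟩ := ih x hx'
      exact ⟨C', hC'.trans (Set.subset_insert _ _), hp⟩

lemma exists_path {B : Set G.E} {v w : G.V} (h : G.ReachOn B v w) :
    ∃ C, IsPath G B v w C := by
  induction h using Relation.ReflTransGen.head_induction_on with
  | refl => exact ⟨∅, IsPath.nil w⟩
  | @head a c hac hcb ih =>
    obtain ⟨C, hC⟩ := ih
    by_cases ha : a ∈ G.VS C ∨ a = w
    · obtain ⟨C', _, hp⟩ := hC.trunc a ha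
      exact ⟨C', hp⟩
    · push_neg at ha
      obtain ⟨f, hfB, hend⟩ := hac
      exact ⟨insert f C, IsPath.cons f a c w C hfB hend hC ha.1 ha.2⟩

end IsPath

/-- A non-separating edge (relative to an edge set `A`) lies on a cycle inside `A`. -/
lemma exists_cycle {A : Set G.E} {e : G.E} (he : e ∈ A)
    (h : G.ReachOn (A \ {e}) (G.fst e) (G.snd e)) :
    ∃ C, C ⊆ A ∧ G.IsCycleSet C ∧ e ∈ C := by
  obtain ⟨P, hP⟩ := IsPath.exists_path h
  have hPB : P ⊆ A \ {e} := hP.subset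
  have heP : e ∉ P := fun hh => (hPB hh).2 rfl
  have hCA : insert e P ⊆ A := Set.insert_subset he (hPB.trans (Set.diff_subset))
  have hPC : P = (insert e P) \ {e} := (Set.insert_diff_self_of_notMem heP).symm
  refine ⟨insert e P, hCA, ?_, Set.mem_insert _ _⟩
  rw [isCycleSet_iff]
  rcases hP.card with ⟨rfl, hvw⟩ | ⟨hcard, hfst, hsnd, hne⟩
  · -- loop case
    have hVS : G.VS (insert e (∅ : Set G.E)) = {G.fst e} := by
      rw [VS_insert, VS_empty, Set.union_empty, ← hvw]
      simp
    refine ⟨⟨e, Set.mem_insert _ _⟩, ?_, ?_, ?_⟩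
    · intro x hx y hy
      rw [hVS] at hx hy
      rw [Set.mem_singleton_iff] at hx hy
      rw [hx, hy]
      exact ReachOn.refl
    · intro f hf
      rcases Set.mem_insert_iff.1 hf with rfl | hf
      · rw [← hvw]; exact ReachOn.refl
      · exact absurd hf (Set.notMem_empty f)
    · rw [hVS, Set.ncard_singleton, Set.ncard_insert_of_notMem (Set.notMem_empty e),
        Set.ncard_empty]
  · have hVS : G.VS (insert e P) = G.VS P := by
      rw [VS_insert]
      apply Set.union_eq_self_of_subset_left
      intro x hx
      rcases hx with rfl | hx
      · exact hfst
      · rw [Set.mem_singleton_iff] at hx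
        exact hx ▸ hsnd
    have hsubP : P \ {f | False} ⊆ (insert e P) := hPC ▸ Set.diff_subset.trans (Set.subset_insert _ _)
    refine ⟨⟨e, Set.mem_insert _ _⟩, ?_, ?_, ?_⟩
    · intro x hx y hy
      rw [hVS] at hx hy
      have h1 := (hP.conn x hx).symm
      have h2 := hP.conn y hy
      exact (h1.trans h2).mono (Set.subset_insert _ _)
    · intro f hf
      rcases Set.mem_insert_iff.1 hf with rfl | hfP
      · rw [← hPC]
        exact hP.reach
      · have hef : e ≠ f := fun hh => heP (hh ▸ hfP)
        have hsub : P \ {f} ⊆ (insert e P) \ {f} :=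
          Set.diff_subset_diff_left (Set.subset_insert _ _)
        have hestep : G.ReachOn ((insert e P) \ {f}) (G.fst e) (G.snd e) :=
          ReachOn.single ⟨e, ⟨Set.mem_insert _ _, hef⟩, Or.inl ⟨rfl, rfl⟩⟩
        rcases hP.split f hfP with ⟨h1, h2⟩ | ⟨h1, h2⟩
        · exact ((h1.mono hsub).symm.trans hestep).trans (h2.mono hsub).symm
        · exact ((h2.mono hsub).trans hestep.symm).trans (h1.mono hsub)
    · rw [hVS, Set.ncard_insert_of_notMem heP, hcard]

end Multigraph
namespace Multigraph

variable {G : Multigraph}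

/-- Canonical count of edges satisfying a predicate (fixed classical instance). -/
def cntE (G : Multigraph) (p : G.E → Prop) : ℕ :=
  (@Finset.filter _ p (fun _ => Classical.propDecidable _) Finset.univ).card

/-- Canonical finset of vertices in a set. -/
def fsetV (G : Multigraph) (K : Set G.V) : Finset G.V :=
  @Finset.filter _ (fun v => v ∈ K) (fun _ => Classical.propDecidable _) Finset.univ

lemma mem_fsetV {K : Set G.V} {v : G.V} : v ∈ G.fsetV K ↔ v ∈ K := by
  unfold fsetV
  rw [Finset.mem_filter]
  exact ⟨fun h => h.2, fun h => ⟨Finset.mem_univ _, h⟩⟩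

lemma fsetV_card {K : Set G.V} : (G.fsetV K).card = K.ncard := by
  classical
  rw [Set.ncard_eq_toFinset_card' K]
  congr 1
  ext v
  rw [mem_fsetV, Set.mem_toFinset]

lemma cntE_congr {p q : G.E → Prop} (h : ∀ f, p f ↔ q f) : G.cntE p = G.cntE q := by
  unfold cntE
  congr 1
  ext f
  simp only [Finset.mem_filter, Finset.mem_univ, true_and]
  exact h f

lemma cntE_pos {p : G.E → Prop} {f : G.E} (hf : p f) : 1 ≤ G.cntE p := by
  unfold cntE
  refine Finset.card_pos.2 ⟨f, ?_⟩
  rw [Finset.mem_filter]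
  exact ⟨Finset.mem_univ f, hf⟩

lemma cntE_two {p : G.E → Prop} {f g : G.E} (hfg : f ≠ g) (hf : p f) (hg : p g) :
    2 ≤ G.cntE p := by
  unfold cntE
  have hsub : ({f, g} : Finset G.E) ⊆
      @Finset.filter _ p (fun _ => Classical.propDecidable _) Finset.univ := by
    intro x hx
    rw [Finset.mem_insert, Finset.mem_singleton] at hx
    rw [Finset.mem_filter]
    rcases hx with rfl | rfl
    · exact ⟨Finset.mem_univ _, hf⟩
    · exact ⟨Finset.mem_univ _, hg⟩
  have := Finset.card_le_card hsub
  rwa [Finset.card_pair hfg] at this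

lemma cntE_zero {p : G.E → Prop} (h : ∀ f, ¬ p f) : G.cntE p = 0 := by
  unfold cntE
  rw [Finset.card_eq_zero, Finset.filter_eq_empty_iff]
  exact fun {f} _ => h f

lemma cntE_eq_one {p : G.E → Prop} {g : G.E} (hg : p g) (hu : ∀ f, p f → f = g) :
    G.cntE p = 1 := by
  unfold cntE
  rw [Finset.card_eq_one]
  refine ⟨g, ?_⟩
  ext f
  rw [Finset.mem_filter, Finset.mem_singleton]
  constructor
  · rintro ⟨_, hf⟩; exact hu f hf
  · rintro rfl; exact ⟨Finset.mem_univ _, hg⟩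

lemma cntE_unique {p : G.E → Prop} (h : G.cntE p = 1) {f f' : G.E}
    (hf : p f) (hf' : p f') : f = f' := by
  by_contra hne
  have := cntE_two (G := G) hne hf hf'
  omega

lemma cntE_not {p : G.E → Prop} (h : G.cntE p = 0) (f : G.E) : ¬ p f := by
  intro hf
  have := cntE_pos (G := G) hf
  omega

lemma cntE_partition (p q : G.E → Prop) :
    G.cntE p = G.cntE (fun f => p f ∧ q f) + G.cntE (fun f => p f ∧ ¬ q f) := by
  unfold cntE
  have hdisj : Disjoint
      (@Finset.filter _ (fun f => p f ∧ q f) (fun _ => Classical.propDecidable _) Finset.univ)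
      (@Finset.filter _ (fun f => p f ∧ ¬ q f) (fun _ => Classical.propDecidable _)
        Finset.univ) := by
    rw [Finset.disjoint_left]
    intro f hf1 hf2
    simp only [Finset.mem_filter] at hf1 hf2
    exact hf2.2.2 hf1.2.2
  rw [← Finset.card_union_of_disjoint hdisj]
  congr 1
  ext f
  simp only [Finset.mem_union, Finset.mem_filter, Finset.mem_univ, true_and]
  tauto

lemma cntE_eq_ncard {A : Set G.E} : G.cntE (· ∈ A) = A.ncard := by
  classical
  unfold cntE
  rw [Set.ncard_eq_toFinset_card' A]
  congr 1
  ext f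
  rw [Finset.mem_filter, Set.mem_toFinset]
  exact ⟨fun h => h.2, fun h => ⟨Finset.mem_univ _, h⟩⟩

lemma sum_cntE_fst {p : G.E → Prop} {K : Set G.V} (hK : ∀ f, p f → G.fst f ∈ K) :
    ∑ v ∈ G.fsetV K, G.cntE (fun f => p f ∧ G.fst f = v) = G.cntE p := by
  have hmap : ∀ f ∈ (@Finset.filter _ p (fun _ => Classical.propDecidable _) Finset.univ),
      G.fst f ∈ G.fsetV K := by
    intro f hf
    rw [Finset.mem_filter] at hf
    exact mem_fsetV.2 (hK f hf.2)
  have h1 := Finset.card_eq_sum_card_fiberwise hmap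
  unfold cntE
  rw [h1]
  apply Finset.sum_congr rfl
  intro v _
  refine congrArg Finset.card (Finset.ext fun f => ?_)
  simp only [Finset.mem_filter, Finset.mem_univ, true_and] <;> tauto

lemma sum_cntE_snd {p : G.E → Prop} {K : Set G.V} (hK : ∀ f, p f → G.snd f ∈ K) :
    ∑ v ∈ G.fsetV K, G.cntE (fun f => p f ∧ G.snd f = v) = G.cntE p := by
  have hmap : ∀ f ∈ (@Finset.filter _ p (fun _ => Classical.propDecidable _) Finset.univ),
      G.snd f ∈ G.fsetV K := by
    intro f hf
    rw [Finset.mem_filter] at hf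
    exact mem_fsetV.2 (hK f hf.2)
  have h1 := Finset.card_eq_sum_card_fiberwise hmap
  unfold cntE
  rw [h1]
  apply Finset.sum_congr rfl
  intro v _
  refine congrArg Finset.card (Finset.ext fun f => ?_)
  simp only [Finset.mem_filter, Finset.mem_univ, true_and] <;> tauto

/-- Degree of `v` in the edge set `A` (loops count twice). -/
def degOn (G : Multigraph) (A : Set G.E) (v : G.V) : ℕ :=
  G.cntE (fun f => f ∈ A ∧ G.fst f = v) + G.cntE (fun f => f ∈ A ∧ G.snd f = v)

lemma degOn_of_not_mem_VS {A : Set G.E} {v : G.V} (hv : v ∉ G.VS A) :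
    G.degOn A v = 0 := by
  unfold degOn
  rw [cntE_zero (fun f hf => hv ⟨f, hf.1, Or.inl hf.2⟩),
    cntE_zero (fun f hf => hv ⟨f, hf.1, Or.inr hf.2⟩)]

/-- In a graph all of whose degrees are even, no edge is separating. -/
lemma even_deg_nonsep {A : Set G.E} (hA : ∀ v, Even (G.degOn A v)) {g : G.E} (hg : g ∈ A) :
    G.ReachOn (A \ {g}) (G.fst g) (G.snd g) := by
  by_contra hsep
  set K : Set G.V := {w | G.ReachOn (A \ {g}) (G.fst g) w} with hK
  have hfstK : G.fst g ∈ K := ReachOn.refl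
  have hsndK : G.snd g ∉ K := hsep
  have hclosed : ∀ f, f ∈ A → f ≠ g → (G.fst f ∈ K ↔ G.snd f ∈ K) := by
    intro f hf hfg
    constructor
    · intro h; exact ReachOn.trans h (ReachOn.single ⟨f, ⟨hf, hfg⟩, Or.inl ⟨rfl, rfl⟩⟩)
    · intro h; exact ReachOn.trans h (ReachOn.single ⟨f, ⟨hf, hfg⟩, Or.inr ⟨rfl, rfl⟩⟩)
  set A' : G.E → Prop := fun f => f ∈ A ∧ f ≠ g ∧ G.fst f ∈ K with hA'
  have e1 : ∀ v ∈ G.fsetV K,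
      G.cntE (fun f => f ∈ A ∧ G.fst f = v)
        = G.cntE (fun f => A' f ∧ G.fst f = v) + G.cntE (fun f => f = g ∧ G.fst f = v) := by
    intro v hv
    rw [mem_fsetV] at hv
    rw [cntE_partition (fun f => f ∈ A ∧ G.fst f = v) (fun f => f ≠ g)]
    congr 1
    · apply cntE_congr
      intro f
      constructor
      · rintro ⟨⟨h1, rfl⟩, h3⟩; exact ⟨⟨h1, h3, hv⟩, rfl⟩
      · rintro ⟨⟨h1, h3, _⟩, rfl⟩; exact ⟨⟨h1, rfl⟩, h3⟩
    · apply cntE_congr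
      intro f
      constructor
      · rintro ⟨⟨h1, rfl⟩, h3⟩; exact ⟨Classical.not_not.1 h3, rfl⟩
      · rintro ⟨rfl, h2⟩; exact ⟨⟨hg, h2⟩, fun hh => hh rfl⟩
  have e2 : ∀ v ∈ G.fsetV K,
      G.cntE (fun f => f ∈ A ∧ G.snd f = v)
        = G.cntE (fun f => A' f ∧ G.snd f = v) + G.cntE (fun f => f = g ∧ G.snd f = v) := by
    intro v hv
    rw [mem_fsetV] at hv
    rw [cntE_partition (fun f => f ∈ A ∧ G.snd f = v) (fun f => f ≠ g)]
    congr 1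
    · apply cntE_congr
      intro f
      constructor
      · rintro ⟨⟨h1, rfl⟩, h3⟩; exact ⟨⟨h1, h3, (hclosed f h1 h3).2 hv⟩, rfl⟩
      · rintro ⟨⟨h1, h3, _⟩, rfl⟩; exact ⟨⟨h1, rfl⟩, h3⟩
    · apply cntE_congr
      intro f
      constructor
      · rintro ⟨⟨h1, rfl⟩, h3⟩; exact ⟨Classical.not_not.1 h3, rfl⟩
      · rintro ⟨rfl, h2⟩; exact ⟨⟨hg, h2⟩, fun hh => hh rfl⟩
  have hsum : ∑ v ∈ G.fsetV K, G.degOn A v = 2 * G.cntE A' + 1 := by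
    unfold degOn
    rw [Finset.sum_add_distrib, Finset.sum_congr rfl e1, Finset.sum_congr rfl e2,
      Finset.sum_add_distrib, Finset.sum_add_distrib,
      sum_cntE_fst (fun f hf => hf.2.2),
      sum_cntE_snd (fun f hf => (hclosed f hf.1 hf.2.1).1 hf.2.2)]
    have hg1 : ∑ v ∈ G.fsetV K, G.cntE (fun f => f = g ∧ G.fst f = v) = 1 := by
      rw [Finset.sum_eq_single (G.fst g)]
      · exact cntE_eq_one ⟨rfl, rfl⟩ (fun f hf => hf.1)
      · intro v _ hvne
        exact cntE_zero (by rintro f ⟨rfl, h2⟩; exact hvne h2.symm)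
      · intro hnot
        exact absurd (mem_fsetV.2 hfstK) hnot
    have hg2 : ∑ v ∈ G.fsetV K, G.cntE (fun f => f = g ∧ G.snd f = v) = 0 := by
      apply Finset.sum_eq_zero
      intro v hv
      rw [mem_fsetV] at hv
      exact cntE_zero (by rintro f ⟨rfl, h2⟩; exact hsndK (h2 ▸ hv))
    rw [hg1, hg2]
    ring
  have heven : Even (∑ v ∈ G.fsetV K, G.degOn A v) :=
    Finset.even_sum _ (fun v _ => hA v)
  obtain ⟨k, hk⟩ := heven
  omega

/-- In a cycle, every incident vertex has degree exactly 2. -/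
lemma cycle_degOn_eq_two {C : Set G.E} (hC : G.IsCycleSet C) {v : G.V} (hv : v ∈ G.VS C) :
    G.degOn C v = 2 := by
  obtain ⟨hne, hconn, hnosep, hcard⟩ := isCycleSet_iff.1 hC
  have hge : ∀ w ∈ G.VS C, 2 ≤ G.degOn C w := by
    intro w hw
    obtain ⟨f, hfC, hf⟩ := hw
    have hpos : 1 ≤ G.degOn C w := by
      unfold degOn
      rcases hf with hf | hf
      · have := cntE_pos (G := G) (p := fun f => f ∈ C ∧ G.fst f = w) ⟨hfC, hf⟩
        omega
      · have := cntE_pos (G := G) (p := fun f => f ∈ C ∧ G.snd f = w) ⟨hfC, hf⟩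
        omega
    by_contra hlt
    have hdeg1 : G.degOn C w = 1 := by omega
    unfold degOn at hdeg1
    -- exactly one incidence at w; call the incident edge f
    have hfix : ∀ (h : G.E), h ∈ C → (G.fst h = w ∨ G.snd h = w) → h = f := by
      intro h hhC hh
      by_contra hne'
      have h2 : 2 ≤ G.cntE (fun f => f ∈ C ∧ G.fst f = w)
          + G.cntE (fun f => f ∈ C ∧ G.snd f = w) := by
        rcases hh with hh | hh <;> rcases hf with hf | hf
        · have := cntE_two (G := G) (p := fun f => f ∈ C ∧ G.fst f = w) hne' ⟨hhC, hh⟩ ⟨hfC, hf⟩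
          omega
        · have h1 := cntE_pos (G := G) (p := fun f => f ∈ C ∧ G.fst f = w) ⟨hhC, hh⟩
          have h2 := cntE_pos (G := G) (p := fun f => f ∈ C ∧ G.snd f = w) ⟨hfC, hf⟩
          omega
        · have h1 := cntE_pos (G := G) (p := fun f => f ∈ C ∧ G.snd f = w) ⟨hhC, hh⟩
          have h2 := cntE_pos (G := G) (p := fun f => f ∈ C ∧ G.fst f = w) ⟨hfC, hf⟩
          omega
        · have := cntE_two (G := G) (p := fun f => f ∈ C ∧ G.snd f = w) hne' ⟨hhC, hh⟩ ⟨hfC, hf⟩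
          omega
      omega
    have hloop : ¬ (G.fst f = w ∧ G.snd f = w) := by
      rintro ⟨h1, h2⟩
      have hx1 := cntE_pos (G := G) (p := fun f => f ∈ C ∧ G.fst f = w) ⟨hfC, h1⟩
      have hx2 := cntE_pos (G := G) (p := fun f => f ∈ C ∧ G.snd f = w) ⟨hfC, h2⟩
      omega
    have hiso : ∀ u, ¬ G.AdjOn (C \ {f}) w u := by
      rintro u ⟨f', ⟨hf'C, hf'ne⟩, hh⟩
      apply hf'ne
      rw [Set.mem_singleton_iff]
      apply hfix f' hf'C
      rcases hh with ⟨h1, _⟩ | ⟨_, h2⟩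
      · exact Or.inl h1
      · exact Or.inr h2
    have hreach := hnosep f hfC
    have hstay : ∀ x, G.ReachOn (C \ {f}) w x → w = x := by
      intro x hx
      rcases Relation.ReflTransGen.cases_head hx with rfl | ⟨c, hc, _⟩
      · rfl
      · exact absurd hc (hiso c)
    rcases hf with hf | hf
    · have := hstay _ (hf ▸ hreach)
      exact hloop ⟨hf, by rw [← this]⟩
    · have := hstay _ (hf ▸ hreach.symm)
      exact hloop ⟨by rw [← this], hf⟩
  have hsum : ∑ w ∈ G.fsetV (G.VS C), G.degOn C w = 2 * (G.VS C).ncard := by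
    unfold degOn
    rw [Finset.sum_add_distrib,
      sum_cntE_fst (K := G.VS C) (fun f hf => mem_VS_fst hf),
      sum_cntE_snd (K := G.VS C) (fun f hf => mem_VS_snd hf),
      cntE_eq_ncard, hcard]
    ring
  by_contra hne2
  have hv3 : 3 ≤ G.degOn C v := by
    have := hge v hv
    omega
  have hlt : ∑ w ∈ G.fsetV (G.VS C), (2 : ℕ) < ∑ w ∈ G.fsetV (G.VS C), G.degOn C w := by
    apply Finset.sum_lt_sum
    · intro i hi
      exact hge i (mem_fsetV.1 hi)
    · exact ⟨v, mem_fsetV.2 hv, by omega⟩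
  rw [Finset.sum_const, smul_eq_mul, mul_comm, fsetV_card, hsum] at hlt
  omega

lemma cycle_degOn_even {C : Set G.E} (hC : G.IsCycleSet C) (v : G.V) :
    Even (G.degOn C v) := by
  by_cases hv : v ∈ G.VS C
  · rw [cycle_degOn_eq_two hC hv]
    exact Even.add_self 1
  · rw [degOn_of_not_mem_VS hv]
    exact Even.zero

lemma degOn_union {A B : Set G.E} (h : Disjoint A B) (v : G.V) :
    G.degOn (A ∪ B) v = G.degOn A v + G.degOn B v := by
  unfold degOn
  rw [cntE_partition (fun f => f ∈ A ∪ B ∧ G.fst f = v) (fun f => f ∈ A),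
    cntE_partition (fun f => f ∈ A ∪ B ∧ G.snd f = v) (fun f => f ∈ A)]
  have c1 : G.cntE (fun f => (f ∈ A ∪ B ∧ G.fst f = v) ∧ f ∈ A)
      = G.cntE (fun f => f ∈ A ∧ G.fst f = v) :=
    cntE_congr (fun f => ⟨fun hf => ⟨hf.2, hf.1.2⟩, fun hf => ⟨⟨Or.inl hf.1, hf.2⟩, hf.1⟩⟩)
  have c2 : G.cntE (fun f => (f ∈ A ∪ B ∧ G.fst f = v) ∧ f ∉ A)
      = G.cntE (fun f => f ∈ B ∧ G.fst f = v) :=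
    cntE_congr (fun f => ⟨fun hf => ⟨hf.1.1.resolve_left hf.2, hf.1.2⟩,
      fun hf => ⟨⟨Or.inr hf.1, hf.2⟩, fun ha => Set.disjoint_left.1 h ha hf.1⟩⟩)
  have c3 : G.cntE (fun f => (f ∈ A ∪ B ∧ G.snd f = v) ∧ f ∈ A)
      = G.cntE (fun f => f ∈ A ∧ G.snd f = v) :=
    cntE_congr (fun f => ⟨fun hf => ⟨hf.2, hf.1.2⟩, fun hf => ⟨⟨Or.inl hf.1, hf.2⟩, hf.1⟩⟩)
  have c4 : G.cntE (fun f => (f ∈ A ∪ B ∧ G.snd f = v) ∧ f ∉ A)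
      = G.cntE (fun f => f ∈ B ∧ G.snd f = v) :=
    cntE_congr (fun f => ⟨fun hf => ⟨hf.1.1.resolve_left hf.2, hf.1.2⟩,
      fun hf => ⟨⟨Or.inr hf.1, hf.2⟩, fun ha => Set.disjoint_left.1 h ha hf.1⟩⟩)
  rw [c1, c2, c3, c4]
  ring

lemma symmdiff_degOn_even {C C' : Set G.E}
    (h1 : ∀ v, Even (G.degOn C v)) (h2 : ∀ v, Even (G.degOn C' v)) (v : G.V) :
    Even (G.degOn ((C \ C') ∪ (C' \ C)) v) := by
  have d1 : G.degOn C v = G.degOn (C \ C') v + G.degOn (C ∩ C') v := by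
    rw [← degOn_union (Set.disjoint_left.2 (fun f hf1 hf2 => hf1.2 hf2.2)),
      Set.diff_union_inter]
  have d2 : G.degOn C' v = G.degOn (C' \ C) v + G.degOn (C' ∩ C) v := by
    rw [← degOn_union (Set.disjoint_left.2 (fun f hf1 hf2 => hf1.2 hf2.2)),
      Set.diff_union_inter]
  have d3 : G.degOn ((C \ C') ∪ (C' \ C)) v = G.degOn (C \ C') v + G.degOn (C' \ C) v :=
    degOn_union (Set.disjoint_left.2 (fun f hf1 hf2 => hf1.2 hf2.1)) v
  have hint : G.degOn (C ∩ C') v = G.degOn (C' ∩ C) v := by rw [Set.inter_comm]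
  obtain ⟨a, ha⟩ := h1 v
  obtain ⟨b, hb⟩ := h2 v
  rw [Nat.even_iff]
  rw [d1] at ha
  rw [d2] at hb
  omega

/-- Symmetric difference of two cycles: an edge of one but not the other lies on a
cycle avoiding the common part. -/
lemma exists_cycle_symmdiff {C C' : Set G.E} (hC : G.IsCycleSet C) (hC' : G.IsCycleSet C')
    {g : G.E} (hg : g ∈ C') (hgC : g ∉ C) :
    ∃ Z, Z ⊆ (C \ C') ∪ (C' \ C) ∧ G.IsCycleSet Z ∧ g ∈ Z := by
  have heven := symmdiff_degOn_even (cycle_degOn_even hC) (cycle_degOn_even hC')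
  have hgΔ : g ∈ (C \ C') ∪ (C' \ C) := Or.inr ⟨hg, hgC⟩
  exact exists_cycle hgΔ (even_deg_nonsep heven hgΔ)

end Multigraph
namespace Multigraph

variable {G : Multigraph}

lemma adj_symmetric (M : Multigraph) : Symmetric M.Adj := by
  rintro a b ⟨f, h | h⟩
  exacts [⟨f, Or.inr h⟩, ⟨f, Or.inl h⟩]

lemma mem_sepEdges_iff {f : G.E} : f ∈ G.sepEdges ↔ G.IsSeparating f := Iff.rfl

variable {S : Set G.E}

lemma pullDel_compl_S :
    G.pullDel G.sepEdges ({x | x.1 ∈ S}ᶜ : Set (G.deleteEdges G.sepEdges).E)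
      = G.sepEdgesᶜ \ S := by
  ext f
  simp only [pullDel, Set.mem_setOf_eq, Set.mem_compl_iff, Set.mem_diff]
  constructor
  · rintro ⟨h1, h2⟩; exact ⟨h1, h2⟩
  · rintro ⟨h1, h2⟩; exact ⟨h1, h2⟩

lemma nested_adj_iff {v w : G.V} :
    ((G.deleteEdges G.sepEdges).deleteEdges {x | x.1 ∈ S}).Adj v w
      ↔ G.AdjOn (G.sepEdgesᶜ \ S) v w := by
  erw [deleteEdges_adj_iff, deleteEdges_adjOn_iff, pullDel_compl_S]

lemma quot_mk_eq_iff {v w : G.V} :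
    (Quot.mk ((G.deleteEdges G.sepEdges).deleteEdges {x | x.1 ∈ S}).Adj v
      = Quot.mk ((G.deleteEdges G.sepEdges).deleteEdges {x | x.1 ∈ S}).Adj w)
      ↔ G.ReachOn (G.sepEdgesᶜ \ S) v w := by
  erw [Quot.eq]
  constructor
  · intro h
    have hsym : Symmetric ((G.deleteEdges G.sepEdges).deleteEdges {x | x.1 ∈ S}).Adj :=
      adj_symmetric _
    exact Relation.ReflTransGen.mono (fun a b hab => nested_adj_iff.1 hab) _ _
      (reflTransGen_of_eqvGen hsym h)
  · intro h
    exact eqvGen_of_reflTransGen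
      (Relation.ReflTransGen.mono (fun a b hab => nested_adj_iff.2 hab) _ _ h)

/-- Edges of `G` corresponding to a set `W` of edges of the contraction. -/
def lowK (G : Multigraph) (S : Set G.E)
    (W : Set ((G.deleteEdges G.sepEdges).contractCompl {x | x.1 ∈ S}).E) : Set G.E :=
  {f | ∃ (h1 : f ∉ G.sepEdges) (h2 : f ∈ S),
      (⟨⟨f, h1⟩, h2⟩ : ((G.deleteEdges G.sepEdges).contractCompl {x | x.1 ∈ S}).E) ∈ W}

lemma reach_project {W : Set ((G.deleteEdges G.sepEdges).contractCompl {x | x.1 ∈ S}).E}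
    {v w : G.V} (h : G.ReachOn ((G.sepEdgesᶜ \ S) ∪ G.lowK S W) v w) :
    Relation.ReflTransGen
      (((G.deleteEdges G.sepEdges).contractCompl {x | x.1 ∈ S}).AdjOn W)
      (Quot.mk ((G.deleteEdges G.sepEdges).deleteEdges {x | x.1 ∈ S}).Adj v)
      (Quot.mk ((G.deleteEdges G.sepEdges).deleteEdges {x | x.1 ∈ S}).Adj w) := by
  induction h with
  | refl => exact Relation.ReflTransGen.refl
  | tail _ hadj ih =>
    obtain ⟨f, hf, hor⟩ := hadj
    rcases hf with hD | ⟨h1, h2, hW⟩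
    · have hq : Quot.mk ((G.deleteEdges G.sepEdges).deleteEdges {x | x.1 ∈ S}).Adj (G.fst f)
          = Quot.mk ((G.deleteEdges G.sepEdges).deleteEdges {x | x.1 ∈ S}).Adj (G.snd f) :=
        Quot.sound (nested_adj_iff.mpr ⟨f, hD, Or.inl ⟨rfl, rfl⟩⟩)
      rcases hor with ⟨ha, hb⟩ | ⟨ha, hb⟩
      · rw [ha, hb] at hq
        exact hq ▸ ih
      · rw [ha, hb] at hq
        exact hq.symm ▸ ih
    · rcases hor with ⟨ha, hb⟩ | ⟨ha, hb⟩
      · exact ih.tail ⟨⟨⟨f, h1⟩, h2⟩, hW, Or.inl ⟨congrArg _ ha, congrArg _ hb⟩⟩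
      · exact ih.tail ⟨⟨⟨f, h1⟩, h2⟩, hW, Or.inr ⟨congrArg _ ha, congrArg _ hb⟩⟩

lemma reach_lift {W : Set ((G.deleteEdges G.sepEdges).contractCompl {x | x.1 ∈ S}).E}
    {x y : ((G.deleteEdges G.sepEdges).contractCompl {x | x.1 ∈ S}).V}
    (h : Relation.ReflTransGen
      (((G.deleteEdges G.sepEdges).contractCompl {x | x.1 ∈ S}).AdjOn W) x y) :
    ∀ v w : G.V, Quot.mk ((G.deleteEdges G.sepEdges).deleteEdges {x | x.1 ∈ S}).Adj v = x →
      Quot.mk ((G.deleteEdges G.sepEdges).deleteEdges {x | x.1 ∈ S}).Adj w = y →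
      G.ReachOn ((G.sepEdgesᶜ \ S) ∪ G.lowK S W) v w := by
  induction h using Relation.ReflTransGen.head_induction_on with
  | refl =>
    intro v w hv hw
    exact (quot_mk_eq_iff.1 (hv.trans hw.symm)).mono Set.subset_union_left
  | @head a c hac hcy ih =>
    intro v w hv hw
    obtain ⟨ξ, hW, hor⟩ := hac
    obtain ⟨⟨f, h1⟩, h2⟩ := ξ
    have hstep : G.AdjOn ((G.sepEdgesᶜ \ S) ∪ G.lowK S W) (G.fst f) (G.snd f) :=
      ⟨f, Or.inr ⟨h1, h2, hW⟩, Or.inl ⟨rfl, rfl⟩⟩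
    rcases hor with ⟨ha, hb⟩ | ⟨ha, hb⟩
    · have hva : G.ReachOn ((G.sepEdgesᶜ \ S) ∪ G.lowK S W) v (G.fst f) :=
        (quot_mk_eq_iff.1 (hv.trans ha.symm)).mono Set.subset_union_left
      exact (hva.trans (ReachOn.single hstep)).trans (ih (G.snd f) w hb hw)
    · have hva : G.ReachOn ((G.sepEdgesᶜ \ S) ∪ G.lowK S W) v (G.snd f) :=
        (quot_mk_eq_iff.1 (hv.trans hb.symm)).mono Set.subset_union_left
      exact (hva.trans (ReachOn.single hstep.symm)).trans (ih (G.fst f) w ha hw)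

/-- In the core (restriction to all edges), every vertex is incident to an edge. -/
lemma core_VS_univ {M : Multigraph} :
    (M.restrict Set.univ).VS Set.univ = Set.univ := by
  ext x
  simp only [Set.mem_univ, iff_true]
  obtain ⟨x1, e, _, hx⟩ := x
  rcases hx with hx | hx
  · exact ⟨⟨e, trivial⟩, trivial, Or.inl (Subtype.ext hx)⟩
  · exact ⟨⟨e, trivial⟩, trivial, Or.inr (Subtype.ext hx)⟩

end Multigraph
namespace Multigraph

variable {G : Multigraph}

lemma two_le_card {α : Type*} [Finite α] {a b : α} (h : a ≠ b) : 2 ≤ Nat.card α := by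
  have hnt : Nontrivial α := ⟨a, b, h⟩
  letI := Fintype.ofFinite α
  rw [Nat.card_eq_fintype_card]
  have := Fintype.one_lt_card_iff_nontrivial.2 hnt
  omega

lemma card_subtype_compl_pair {α : Type*} [Finite α] {a b : α} (h : a ≠ b) :
    Nat.card {x : α // x ∉ ({a, b} : Set α)} = Nat.card α - 2 := by
  have h1 : Nat.card {x : α // x ∉ ({a, b} : Set α)}
      = Nat.card ↥(({a, b} : Set α)ᶜ) := rfl
  have h2 := Set.ncard_add_ncard_compl ({a, b} : Set α)
  rw [Set.ncard_pair h] at h2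
  rw [h1, Nat.card_coe_set_eq]
  omega

lemma card_subtype_compl_singleton {α : Type*} [Finite α] (a : α) :
    Nat.card {x : α // x ∉ ({a} : Set α)} = Nat.card α - 1 := by
  have h1 : Nat.card {x : α // x ∉ ({a} : Set α)}
      = Nat.card ↥(({a} : Set α)ᶜ) := rfl
  have h2 := Set.ncard_add_ncard_compl ({a} : Set α)
  rw [Set.ncard_singleton] at h2
  rw [h1, Nat.card_coe_set_eq]
  omega

variable {S : Set G.E}

/-- Forward direction: two distinct edges of a C1-set lie on the same cycles. -/
lemma isC1_mem_cycle (hS : G.IsC1 S) {e e' : G.E}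
    (heS : e ∈ S) (he'S : e' ∈ S) {C : Set G.E} (hC : G.IsCycleSet C)
    (heC : e ∈ C) : e' ∈ C := by
  by_contra he'C
  have hne : e ≠ e' := fun h => he'C (h ▸ heC)
  obtain ⟨hnonsep, hQcyc, hdel⟩ := hS
  have hesep : e ∉ G.sepEdges := hnonsep e heS
  have he'sep : e' ∉ G.sepEdges := hnonsep e' he'S
  obtain ⟨hQconn, hQsep, hQb1⟩ := hQcyc
  -- the edges of the contracted cycle corresponding to e, e'
  let Qe : (((G.deleteEdges G.sepEdges).contractCompl {x | x.1 ∈ S}).restrict Set.univ).E :=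
    ⟨⟨⟨e, hesep⟩, heS⟩, Set.mem_univ _⟩
  let Qe' : (((G.deleteEdges G.sepEdges).contractCompl {x | x.1 ∈ S}).restrict Set.univ).E :=
    ⟨⟨⟨e', he'sep⟩, he'S⟩, Set.mem_univ _⟩
  have hQconn' : (((G.deleteEdges G.sepEdges).contractCompl {x | x.1 ∈ S}).restrict
      Set.univ).Connected := hQconn
  have hQee' : Qe ≠ Qe' := by
    intro h
    exact hne (congrArg (fun ξ => ξ.1.1.1) h)
  -- no separating edges in Q
  have hQns : ∀ ξ : (((G.deleteEdges G.sepEdges).contractCompl {x | x.1 ∈ S}).restrict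
      Set.univ).E,
      (((G.deleteEdges G.sepEdges).contractCompl {x | x.1 ∈ S}).restrict Set.univ).ReachOn
        (Set.univ \ {ξ})
        ((((G.deleteEdges G.sepEdges).contractCompl {x | x.1 ∈ S}).restrict Set.univ).fst ξ)
        ((((G.deleteEdges G.sepEdges).contractCompl {x | x.1 ∈ S}).restrict Set.univ).snd ξ)
      := by
    intro ξ
    have h0 : ¬ (((G.deleteEdges G.sepEdges).contractCompl {x | x.1 ∈ S}).core).IsSeparating ξ
      := Set.eq_empty_iff_forall_notMem.1 hQsep ξ
    erw [isSeparating_iff, Classical.not_not] at h0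
    rw [← Set.compl_eq_univ_diff]
    exact h0
  -- Q is preconnected, and stays so after deleting Qe'
  have hQtot : ∀ x y, (((G.deleteEdges G.sepEdges).contractCompl {x | x.1 ∈ S}).restrict
      Set.univ).ReachOn Set.univ x y :=
    fun x y => reachable_iff_reachOn_univ.1 (hQconn'.2 x y)
  have htot1 : ∀ x y, (((G.deleteEdges G.sepEdges).contractCompl {x | x.1 ∈ S}).restrict
      Set.univ).ReachOn (Set.univ \ {Qe'}) x y :=
    fun x y => ReachOn.avoid (hQns Qe') (hQtot x y)
  -- the projected cycle path shows Qe is non-separating even avoiding Qe'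
  have hCn : ∀ f ∈ C, f ∉ G.sepEdges := fun f hf => cycle_edge_not_separating hC hf
  have hsub : C \ {e} ⊆ (G.sepEdgesᶜ \ S) ∪ G.lowK S
      (((G.deleteEdges G.sepEdges).contractCompl {x | x.1 ∈ S}).pullRes Set.univ
        ((Set.univ \ {Qe'}) \ {Qe})) := by
    rintro f ⟨hfC, hfe⟩
    rw [Set.mem_singleton_iff] at hfe
    by_cases hfS : f ∈ S
    · refine Or.inr ⟨hCn f hfC, hfS, Set.mem_univ _, ⟨⟨Set.mem_univ _, ?_⟩, ?_⟩⟩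
      · intro hmem
        erw [Set.mem_singleton_iff] at hmem
        exact he'C ((congrArg (fun ξ => ξ.1.1.1) hmem : f = e') ▸ hfC)
      · intro hmem
        erw [Set.mem_singleton_iff] at hmem
        exact hfe (congrArg (fun ξ => ξ.1.1.1) hmem)
    · exact Or.inl ⟨hCn f hfC, hfS⟩
  have hproj := reach_project ((cycle_edge_reachOn hC heC).mono hsub)
  have hQpath : (((G.deleteEdges G.sepEdges).contractCompl {x | x.1 ∈ S}).restrict
      Set.univ).ReachOn ((Set.univ \ {Qe'}) \ {Qe})
      ((((G.deleteEdges G.sepEdges).contractCompl {x | x.1 ∈ S}).restrict Set.univ).fst Qe)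
      ((((G.deleteEdges G.sepEdges).contractCompl {x | x.1 ∈ S}).restrict Set.univ).snd Qe)
      := by
    exact restrict_reachOn_iff.2 hproj
  have htot2 : ∀ x y, (((G.deleteEdges G.sepEdges).contractCompl {x | x.1 ∈ S}).restrict
      Set.univ).ReachOn ((Set.univ \ {Qe'}) \ {Qe}) x y :=
    fun x y => ReachOn.avoid hQpath (htot1 x y)
  -- pass to the graph with Qe, Qe' deleted and count
  have hset : ((Set.univ \ {Qe'}) \ {Qe}) = ({Qe, Qe'} :
      Set (((G.deleteEdges G.sepEdges).contractCompl {x | x.1 ∈ S}).restrict Set.univ).E)ᶜ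
      := by
    ext ξ
    simp only [Set.mem_diff, Set.mem_univ, true_and, Set.mem_compl_iff,
      Set.mem_singleton_iff, Set.mem_insert_iff]
    tauto
  rw [hset] at htot2
  have hpre2 : ((((G.deleteEdges G.sepEdges).contractCompl {x | x.1 ∈ S}).restrict
      Set.univ).deleteEdges {Qe, Qe'}).Preconnected :=
    fun x y => deleteEdges_reachable_iff.2 (htot2 x y)
  have hconn2 : ((((G.deleteEdges G.sepEdges).contractCompl {x | x.1 ∈ S}).restrict
      Set.univ).deleteEdges {Qe, Qe'}).Connected := ⟨hQconn'.1, hpre2⟩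
  have hc2 := numComponents_eq_one hconn2
  have hle := card_V_le ((((G.deleteEdges G.sepEdges).contractCompl {x | x.1 ∈ S}).restrict
      Set.univ).deleteEdges {Qe, Qe'})
  rw [hc2] at hle
  have hcard2 := card_subtype_compl_pair hQee'
  have h2le : 2 ≤ Nat.card (((G.deleteEdges G.sepEdges).contractCompl
      {x | x.1 ∈ S}).restrict Set.univ).E := two_le_card hQee'
  -- |V| = |E| from b1 = 1 and connectedness
  have hc1 : (((G.deleteEdges G.sepEdges).contractCompl {x | x.1 ∈ S}).restrict
      Set.univ).numComponents = 1 := numComponents_eq_one hQconn'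
  unfold b1 at hQb1
  have hQb1' : ((((G.deleteEdges G.sepEdges).contractCompl {x | x.1 ∈ S}).restrict
        Set.univ).numComponents : ℤ)
      + (Nat.card (((G.deleteEdges G.sepEdges).contractCompl {x | x.1 ∈ S}).restrict
        Set.univ).E : ℤ)
      - (Nat.card (((G.deleteEdges G.sepEdges).contractCompl {x | x.1 ∈ S}).restrict
        Set.univ).V : ℤ) = 1 := hQb1
  rw [hc1] at hQb1'
  have hVE : Nat.card (((G.deleteEdges G.sepEdges).contractCompl {x | x.1 ∈ S}).restrict
      Set.univ).V = Nat.card (((G.deleteEdges G.sepEdges).contractCompl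
      {x | x.1 ∈ S}).restrict Set.univ).E := by omega
  have hE2 : Nat.card ((((G.deleteEdges G.sepEdges).contractCompl {x | x.1 ∈ S}).restrict
      Set.univ).deleteEdges {Qe, Qe'}).E = Nat.card (((G.deleteEdges
      G.sepEdges).contractCompl {x | x.1 ∈ S}).restrict Set.univ).E - 2 := hcard2
  have hVbridge : Nat.card ((((G.deleteEdges G.sepEdges).contractCompl
      {x | x.1 ∈ S}).restrict Set.univ).deleteEdges {Qe, Qe'}).V
      = Nat.card (((G.deleteEdges G.sepEdges).contractCompl {x | x.1 ∈ S}).restrict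
        Set.univ).V := rfl
  omega

end Multigraph
namespace Multigraph

variable {G : Multigraph} {S : Set G.E}

lemma card_coreE (hSn : ∀ f ∈ S, f ∉ G.sepEdges) :
    Nat.card ((((G.deleteEdges G.sepEdges).contractCompl {x | x.1 ∈ S}).restrict
      Set.univ).E) = S.ncard := by
  rw [← Nat.card_coe_set_eq]
  exact Nat.card_congr ⟨fun x => ⟨x.1.1.1, x.1.2⟩,
    fun f => ⟨⟨⟨f.1, hSn f.1 f.2⟩, f.2⟩, Set.mem_univ _⟩, fun x => rfl, fun f => rfl⟩

/-- Backward direction: the set of edges lying on exactly the same cycles as a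
non-separating edge `e` is a C1-set. -/
lemma same_cycles_isC1 {e : G.E} (he : ¬ G.IsSeparating e) :
    G.IsC1 {f | ∀ C : Set G.E, G.IsCycleSet C → (f ∈ C ↔ e ∈ C)} := by
  set S := {f | ∀ C : Set G.E, G.IsCycleSet C → (f ∈ C ↔ e ∈ C)} with hSdef
  have heR : G.ReachOn (Set.univ \ {e}) (G.fst e) (G.snd e) := by
    rw [isSeparating_iff, Classical.not_not] at he
    rwa [← Set.compl_eq_univ_diff]
  obtain ⟨C0, -, hC0, heC0⟩ := exists_cycle (Set.mem_univ e) heR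
  have heS : e ∈ S := fun C _ => Iff.rfl
  have hSsub : S ⊆ C0 := fun f hf => (hf C0 hC0).2 heC0
  have hSn : ∀ f ∈ S, f ∉ G.sepEdges := fun f hf =>
    cycle_edge_not_separating hC0 (hSsub hf)
  have hesep : e ∉ G.sepEdges := hSn e heS
  -- key: a non-separating edge not in S lies on a cycle disjoint from S
  have lemG : ∀ g, g ∉ G.sepEdges → g ∉ S →
      ∃ Z, G.IsCycleSet Z ∧ g ∈ Z ∧ ∀ f ∈ S, f ∉ Z := by
    intro g hgs hgS
    rw [hSdef, Set.mem_setOf_eq] at hgS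
    push_neg at hgS
    obtain ⟨C2, hC2, hiff⟩ := hgS
    rcases hiff with ⟨hg2, he2⟩ | ⟨hg2, he2⟩
    · exact ⟨C2, hC2, hg2, fun f hf hfC2 => he2 ((hf C2 hC2).1 hfC2)⟩
    · have hgR : G.ReachOn (Set.univ \ {g}) (G.fst g) (G.snd g) := by
        rw [mem_sepEdges_iff, isSeparating_iff, Classical.not_not] at hgs
        rwa [← Set.compl_eq_univ_diff]
      obtain ⟨C1, -, hC1, hgC1⟩ := exists_cycle (Set.mem_univ g) hgR
      by_cases he1 : e ∈ C1
      · obtain ⟨Z, hZsub, hZ, hgZ⟩ := exists_cycle_symmdiff hC2 hC1 hgC1 hg2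
        refine ⟨Z, hZ, hgZ, ?_⟩
        intro f hf hfZ
        rcases hZsub hfZ with ⟨_, h2⟩ | ⟨_, h2⟩
        · exact h2 ((hf C1 hC1).2 he1)
        · exact h2 ((hf C2 hC2).2 he2)
      · exact ⟨C1, hC1, hgC1, fun f hf hfC1 => he1 ((hf C1 hC1).1 hfC1)⟩
  -- condition (3)
  have hcond3 : ((G.deleteEdges G.sepEdges).deleteEdges {x | x.1 ∈ S}).sepEdges = ∅ := by
    rw [Set.eq_empty_iff_forall_notMem]
    rintro ⟨⟨g, h1⟩, h2⟩ hmem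
    erw [mem_sepEdges_iff, isSeparating_iff] at hmem
    apply hmem
    erw [deleteEdges_reachOn_iff, deleteEdges_reachOn_iff]
    obtain ⟨Z, hZ, hgZ, hZS⟩ := lemG g h1 h2
    refine (cycle_edge_reachOn hZ hgZ).mono ?_
    rintro f ⟨hfZ, hfg⟩
    rw [Set.mem_singleton_iff] at hfg
    have hfs : f ∉ G.sepEdges := cycle_edge_not_separating hZ hfZ
    refine ⟨hfs, (fun hfS => hZS f hfS hfZ : f ∉ S), ?_⟩
    intro hss
    erw [Set.mem_singleton_iff] at hss
    exact hfg (congrArg (fun (ξ : {x : (G.deleteEdges G.sepEdges).E // x ∉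
      ({x | x.1 ∈ S} : Set (G.deleteEdges G.sepEdges).E)}) => ξ.1.1) hss)
  -- representative of a vertex of the core
  have hrep : ∀ x : (((G.deleteEdges G.sepEdges).contractCompl {x | x.1 ∈ S}).restrict
      Set.univ).V, ∃ v : G.V,
      Quot.mk ((G.deleteEdges G.sepEdges).deleteEdges {x | x.1 ∈ S}).Adj v = x.1
        ∧ v ∈ G.VS C0 := by
    rintro ⟨x1, ξ, -, hx2⟩
    obtain ⟨⟨f, h1⟩, h2⟩ := ξ
    rcases hx2 with h | h
    · exact ⟨G.fst f, h, mem_VS_fst (hSsub h2)⟩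
    · exact ⟨G.snd f, h, mem_VS_snd (hSsub h2)⟩
  -- (a) the core is nonempty
  have hQne : Nonempty ((((G.deleteEdges G.sepEdges).contractCompl {x | x.1 ∈ S}).restrict
      Set.univ).V) :=
    ⟨⟨Quot.mk _ (G.fst e), ⟨⟨⟨e, hesep⟩, heS⟩, Set.mem_univ _, Or.inl rfl⟩⟩⟩
  -- (b) the core is preconnected
  have hQpre : ((((G.deleteEdges G.sepEdges).contractCompl {x | x.1 ∈ S}).restrict
      Set.univ)).Preconnected := by
    intro x y
    obtain ⟨vx, hvx, hvxC⟩ := hrep x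
    obtain ⟨vy, hvy, hvyC⟩ := hrep y
    have hreach := (isCycleSet_iff.1 hC0).2.1 vx hvxC vy hvyC
    have hsub : C0 ⊆ (G.sepEdgesᶜ \ S) ∪ G.lowK S
        (((G.deleteEdges G.sepEdges).contractCompl {x | x.1 ∈ S}).pullRes Set.univ
          Set.univ) := by
      intro f hfC
      have hfs : f ∉ G.sepEdges := cycle_edge_not_separating hC0 hfC
      by_cases hfS : f ∈ S
      · exact Or.inr ⟨hfs, hfS, Set.mem_univ _, Set.mem_univ _⟩
      · exact Or.inl ⟨hfs, hfS⟩
    have hproj := reach_project (hreach.mono hsub)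
    have hQr := restrict_reachOn_iff
      (G := (G.deleteEdges G.sepEdges).contractCompl {x | x.1 ∈ S})
      (S := Set.univ) (A := Set.univ)
      (v := ⟨Quot.mk _ vx, hvx.symm ▸ x.2⟩) (w := ⟨Quot.mk _ vy, hvy.symm ▸ y.2⟩)
    have hex : (⟨Quot.mk _ vx, hvx.symm ▸ x.2⟩ : (((G.deleteEdges
        G.sepEdges).contractCompl {x | x.1 ∈ S}).restrict Set.univ).V) = x :=
      Subtype.ext hvx
    have hey : (⟨Quot.mk _ vy, hvy.symm ▸ y.2⟩ : (((G.deleteEdges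
        G.sepEdges).contractCompl {x | x.1 ∈ S}).restrict Set.univ).V) = y :=
      Subtype.ext hvy
    rw [reachable_iff_reachOn_univ, ← hex, ← hey]
    exact hQr.2 hproj
  -- (c) the core has no separating edges
  have hQns : ∀ ξ : (((G.deleteEdges G.sepEdges).contractCompl {x | x.1 ∈ S}).restrict
      Set.univ).E,
      (((G.deleteEdges G.sepEdges).contractCompl {x | x.1 ∈ S}).restrict Set.univ).ReachOn
        ({ξ}ᶜ)
        ((((G.deleteEdges G.sepEdges).contractCompl {x | x.1 ∈ S}).restrict Set.univ).fst ξ)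
        ((((G.deleteEdges G.sepEdges).contractCompl {x | x.1 ∈ S}).restrict Set.univ).snd ξ)
      := by
    rintro ⟨⟨⟨f, h1⟩, h2⟩, -⟩
    have hfC0 : f ∈ C0 := hSsub h2
    have hreach := cycle_edge_reachOn hC0 hfC0
    have hsub : C0 \ {f} ⊆ (G.sepEdgesᶜ \ S) ∪ G.lowK S
        (((G.deleteEdges G.sepEdges).contractCompl {x | x.1 ∈ S}).pullRes Set.univ
          ({(⟨⟨⟨f, h1⟩, h2⟩, Set.mem_univ _⟩ :
            (((G.deleteEdges G.sepEdges).contractCompl {x | x.1 ∈ S}).restrict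
              Set.univ).E)}ᶜ)) := by
      rintro g ⟨hgC, hgf⟩
      rw [Set.mem_singleton_iff] at hgf
      have hgs : g ∉ G.sepEdges := cycle_edge_not_separating hC0 hgC
      by_cases hgS : g ∈ S
      · refine Or.inr ⟨hgs, hgS, Set.mem_univ _, ?_⟩
        intro hss
        erw [Set.mem_singleton_iff] at hss
        exact hgf (congrArg (fun ξ => ξ.1.1.1) hss)
      · exact Or.inl ⟨hgs, hgS⟩
    have hproj := reach_project (hreach.mono hsub)
    exact restrict_reachOn_iff.2 hproj
  -- counting : |V| = |E| for the core
  have hm := card_coreE (G := G) (S := S) hSn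
  have hc1 : ((((G.deleteEdges G.sepEdges).contractCompl {x | x.1 ∈ S}).restrict
      Set.univ)).numComponents = 1 := numComponents_eq_one ⟨hQne, hQpre⟩
  have hle := card_V_le (((G.deleteEdges G.sepEdges).contractCompl {x | x.1 ∈ S}).restrict
      Set.univ)
  rw [hc1] at hle
  have hm1 : 1 ≤ S.ncard := by
    have : S.Nonempty := ⟨e, heS⟩
    have := Set.ncard_pos (Set.toFinite S) |>.2 this
    omega
  have hQtot : ∀ x y, ((((G.deleteEdges G.sepEdges).contractCompl {x | x.1 ∈ S}).restrict
      Set.univ)).ReachOn Set.univ x y :=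
    fun x y => reachable_iff_reachOn_univ.1 (hQpre x y)
  -- Qe : the core edge corresponding to e
  have hVE : Nat.card ((((G.deleteEdges G.sepEdges).contractCompl {x | x.1 ∈ S}).restrict
      Set.univ)).V = Nat.card ((((G.deleteEdges G.sepEdges).contractCompl
      {x | x.1 ∈ S}).restrict Set.univ)).E := by
    set Qe : (((G.deleteEdges G.sepEdges).contractCompl {x | x.1 ∈ S}).restrict
        Set.univ).E := ⟨⟨⟨e, hesep⟩, heS⟩, Set.mem_univ _⟩ with hQedef
    have hQeu : ∀ x y, ((((G.deleteEdges G.sepEdges).contractCompl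
        {x | x.1 ∈ S}).restrict Set.univ)).ReachOn (Set.univ \ {Qe}) x y := by
      intro x y
      refine ReachOn.avoid ?_ (hQtot x y)
      have := hQns Qe
      rwa [Set.compl_eq_univ_diff] at this
    by_contra hneq
    -- Case 1 : |V| = |E| + 1 : impossible since Qe is non-separating
    rcases Nat.lt_or_ge (Nat.card ((((G.deleteEdges G.sepEdges).contractCompl
        {x | x.1 ∈ S}).restrict Set.univ)).E)
        (Nat.card ((((G.deleteEdges G.sepEdges).contractCompl
        {x | x.1 ∈ S}).restrict Set.univ)).V) with hcase | hcase
    · -- |E| < |V| ≤ |E| + 1 : the graph minus Qe is still connected, contradiction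
      have hset : (Set.univ \ {Qe}) = ({Qe} : Set _)ᶜ := (Set.compl_eq_univ_diff _).symm
      have hpre2 : (((((G.deleteEdges G.sepEdges).contractCompl
          {x | x.1 ∈ S}).restrict Set.univ)).deleteEdges {Qe}).Preconnected := by
        intro x y
        apply deleteEdges_reachable_iff.2
        rw [← hset]
        exact hQeu x y
      have hc2 := numComponents_eq_one (H := ((((G.deleteEdges
          G.sepEdges).contractCompl {x | x.1 ∈ S}).restrict Set.univ)).deleteEdges {Qe})
        ⟨hQne, hpre2⟩
      have hle2 := card_V_le (((((G.deleteEdges G.sepEdges).contractCompl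
          {x | x.1 ∈ S}).restrict Set.univ)).deleteEdges {Qe})
      rw [hc2] at hle2
      have hE2 := card_subtype_compl_singleton (α := ((((G.deleteEdges
          G.sepEdges).contractCompl {x | x.1 ∈ S}).restrict Set.univ)).E) Qe
      have hVbridge : Nat.card (((((G.deleteEdges G.sepEdges).contractCompl
          {x | x.1 ∈ S}).restrict Set.univ)).deleteEdges {Qe}).V
          = Nat.card ((((G.deleteEdges G.sepEdges).contractCompl
          {x | x.1 ∈ S}).restrict Set.univ)).V := rfl
      have hEbridge : Nat.card (((((G.deleteEdges G.sepEdges).contractCompl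
          {x | x.1 ∈ S}).restrict Set.univ)).deleteEdges {Qe}).E
          = Nat.card ((((G.deleteEdges G.sepEdges).contractCompl
          {x | x.1 ∈ S}).restrict Set.univ)).E - 1 := hE2
      omega
    · -- |V| < |E| : extract a proper subcycle of the core, lift it, contradiction
      have hlt : Nat.card ((((G.deleteEdges G.sepEdges).contractCompl
          {x | x.1 ∈ S}).restrict Set.univ)).V
          < Nat.card ((((G.deleteEdges G.sepEdges).contractCompl
          {x | x.1 ∈ S}).restrict Set.univ)).E := by omega
      obtain ⟨Z, -, hZc, hQeZ⟩ := exists_cycle (Set.mem_univ Qe) (hQeu _ _)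
      by_cases hZu : Z = Set.univ
      · have hcard := (isCycleSet_iff.1 hZc).2.2.2
        rw [hZu, core_VS_univ, Set.ncard_univ, Set.ncard_univ] at hcard
        omega
      · obtain ⟨ζ, hζZ⟩ := Set.ne_univ_iff_exists_notMem _ |>.1 hZu
        have hg2 : ζ.1.1.1 ∈ S := ζ.1.2
        have hge : ζ.1.1.1 ≠ e := by
          intro hh
          apply hζZ
          have : ζ = Qe := Subtype.ext (Subtype.ext (Subtype.ext hh))
          exact this ▸ hQeZ
        have hQZpath := cycle_edge_reachOn hZc hQeZ
        have hK := restrict_reachOn_iff.1 hQZpath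
        have hG := reach_lift hK (G.fst e) (G.snd e) rfl rfl
        have hsub2 : (G.sepEdgesᶜ \ S) ∪ G.lowK S
            (((G.deleteEdges G.sepEdges).contractCompl {x | x.1 ∈ S}).pullRes Set.univ
              (Z \ {Qe})) ⊆ ({ζ.1.1.1}ᶜ : Set G.E) \ {e} := by
          rintro f (⟨-, hfS⟩ | ⟨h1, h2, h3, hZm, hQem⟩)
          · constructor
            · intro hfg
              rw [Set.mem_singleton_iff] at hfg
              exact hfS (hfg ▸ hg2)
            · intro hfe
              rw [Set.mem_singleton_iff] at hfe
              exact hfS (hfe ▸ heS)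
          · refine ⟨?_, ?_⟩
            · intro hfg
              rw [Set.mem_singleton_iff] at hfg
              apply hζZ
              have hzeq : (⟨⟨⟨f, h1⟩, h2⟩, h3⟩ : (((G.deleteEdges
                  G.sepEdges).contractCompl {x | x.1 ∈ S}).restrict Set.univ).E) = ζ :=
                Subtype.ext (Subtype.ext (Subtype.ext hfg))
              exact hzeq ▸ hZm
            · intro hfe
              rw [Set.mem_singleton_iff] at hfe
              apply hQem
              erw [Set.mem_singleton_iff]
              exact Subtype.ext (Subtype.ext (Subtype.ext hfe))
        have hfin := (hG.mono hsub2)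
        have heg : e ∈ ({ζ.1.1.1}ᶜ : Set G.E) := fun hh => hge (by
          rw [Set.mem_singleton_iff] at hh
          exact hh.symm)
        obtain ⟨Cs, hCs_sub, hCs, heCs⟩ := exists_cycle heg hfin
        have : ζ.1.1.1 ∈ Cs := (hg2 Cs hCs).2 heCs
        exact (hCs_sub this) rfl
  -- assemble
  refine ⟨fun f hf => hSn f hf, ⟨⟨hQne, hQpre⟩, ?_, ?_⟩, hcond3⟩
  · rw [Set.eq_empty_iff_forall_notMem]
    intro ξ hmem
    exact (isSeparating_iff.1 hmem) (hQns ξ)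
  · show ((((G.deleteEdges G.sepEdges).contractCompl {x | x.1 ∈ S}).restrict
      Set.univ)).b1 = 1
    unfold b1
    rw [hc1, hVE]
    ring

end Multigraph
/-- Two non-separating edges belong to the same C1-set iff they
belong to exactly the same cycles. -/
theorem mem_same_isC1_iff_mem_same_cycles (G : Multigraph) (e e' : G.E)
    (he : ¬ G.IsSeparating e) (he' : ¬ G.IsSeparating e') :
    (∃ S : Set G.E, G.IsC1 S ∧ e ∈ S ∧ e' ∈ S) ↔
      (∀ C : Set G.E, G.IsCycleSet C → (e ∈ C ↔ e' ∈ C)) := by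
  constructor
  · rintro ⟨S, hS, heS, he'S⟩ C hC
    exact ⟨fun h => Multigraph.isC1_mem_cycle hS heS he'S hC h,
           fun h => Multigraph.isC1_mem_cycle hS he'S heS hC h⟩
  · intro h
    exact ⟨{f | ∀ C : Set G.E, G.IsCycleSet C → (f ∈ C ↔ e ∈ C)},
      Multigraph.same_cycles_isC1 he, fun C _ => Iff.rfl, fun C hC => (h C hC).symm⟩
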